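/- arXiv:2402.16251 — 16 statements merged into one kernel-verified Lean document; each statement's English description precedes it below -/
import Mathlib

section
/- For every positive integer n, the sum over all permutations σ of [n] of (-1) raised to the number of crossings of σ equals 2^(n-1). (Equivalently, the generating function of the number-of-crossings statistic on S_n evaluated at q = -1 equals 2^(n-1), which is the q = -1 / cyclic sieving evaluation for involutions on S_n with 2^(n-1) fixed points, such as Corteel's map.) -/
open Finset

namespace CrossAux

def crp {N : ℕ} (σ : Equiv.Perm (Fin N)) : Fin N × Fin N → Prop := fun p =>
  (p.1 < p.2 ∧ p.2 ≤ σ p.1 ∧ σ p.1 < σ p.2) ∨ (σ p.1 < σ p.2 ∧ σ p.2 < p.1 ∧ p.1 < p.2)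

instance {N : ℕ} (σ : Equiv.Perm (Fin N)) : DecidablePred (crp σ) := fun p => by
  unfold crp; infer_instance

def sgn {N : ℕ} (σ : Equiv.Perm (Fin N)) : ℤ := (-1) ^ (univ.filter (crp σ)).card

def F (N : ℕ) : ℤ := ∑ σ : Equiv.Perm (Fin N), sgn σ

/-- extension of a permutation of `Fin n` to `Fin (n+1)` fixing the last element -/
def ext {n : ℕ} (π : Equiv.Perm (Fin n)) : Equiv.Perm (Fin (n + 1)) :=
  (finSuccEquivLast.symm).permCongr π.optionCongr

lemma ext_castSucc {n : ℕ} (π : Equiv.Perm (Fin n)) (i : Fin n) :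
    ext π (Fin.castSucc i) = Fin.castSucc (π i) := by
  simp [ext, Equiv.permCongr_apply]

lemma ext_last {n : ℕ} (π : Equiv.Perm (Fin n)) : ext π (Fin.last n) = Fin.last n := by
  simp [ext, Equiv.permCongr_apply]

lemma crs_ext {n : ℕ} (π : Equiv.Perm (Fin n)) :
    (univ.filter (crp (ext π))).card = (univ.filter (crp π)).card := by
  symm
  apply Finset.card_bij (fun p _ => (Fin.castSucc p.1, Fin.castSucc p.2))
  · intro p hp
    simp only [mem_filter, mem_univ, true_and] at hp ⊢
    simpa [crp, ext_castSucc, Fin.castSucc_lt_castSucc_iff, Fin.castSucc_le_castSucc_iff] using hp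
  · intro p hp q hq h
    simp only [Prod.mk.injEq, Fin.castSucc_inj] at h
    exact Prod.ext h.1 h.2
  · intro q hq
    obtain ⟨q1, q2⟩ := q
    simp only [mem_filter, mem_univ, true_and] at hq
    have hlt : q1 < q2 := by
      rcases hq with h | h
      · exact h.1
      · exact h.2.2
    have h1 : q1 ≠ Fin.last n := by
      intro h; rw [h] at hlt; exact absurd (Fin.le_last q2) (not_le.mpr hlt)
    have h2 : q2 ≠ Fin.last n := by
      intro h
      rcases hq with ⟨_, hle, _⟩ | ⟨_, hlt2, _⟩
      · rw [h] at hle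
        have : ext π q1 = Fin.last n := le_antisymm (Fin.le_last _) hle
        have : q1 = Fin.last n := by
          have := (ext π).injective (this.trans (ext_last π).symm)
          exact this
        exact h1 this
      · rw [h, ext_last] at hlt2
        exact absurd (Fin.le_last q1) (not_le.mpr hlt2)
    obtain ⟨i, hi⟩ := Fin.exists_castSucc_eq.mpr h1
    obtain ⟨j, hj⟩ := Fin.exists_castSucc_eq.mpr h2
    refine ⟨(i, j), ?_, ?_⟩
    · simp only [mem_filter, mem_univ, true_and]
      rw [← hi, ← hj] at hq
      simpa [crp, ext_castSucc, Fin.castSucc_lt_castSucc_iff, Fin.castSucc_le_castSucc_iff] using hq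
    · simp [hi, hj]

lemma sgn_ext {n : ℕ} (π : Equiv.Perm (Fin n)) : sgn (ext π) = sgn π := by
  rw [sgn, sgn, crs_ext]

lemma ext_surj {n : ℕ} (σ : Equiv.Perm (Fin (n + 1))) (hσ : σ (Fin.last n) = Fin.last n) :
    ∃ π : Equiv.Perm (Fin n), ext π = σ := by
  set e : Equiv.Perm (Option (Fin n)) := finSuccEquivLast.permCongr σ with he
  have hnone : e none = none := by
    simp [he, Equiv.permCongr_apply, hσ]
  refine ⟨e.removeNone, ?_⟩
  ext x
  refine Fin.lastCases ?_ (fun i => ?_) x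
  · rw [ext_last, hσ]
  · rw [ext_castSucc]
    have hex : ∃ x', e (some i) = some x' := by
      cases hx : e (some i) with
      | none => exact absurd (e.injective (hx.trans hnone.symm)) (by simp)
      | some y => exact ⟨y, rfl⟩
    have := Equiv.removeNone_some e hex
    have he2 : e (some i) = finSuccEquivLast (σ (Fin.castSucc i)) := by
      simp [he, Equiv.permCongr_apply]
    rw [he2] at this
    have h3 := congrArg finSuccEquivLast.symm this
    simp only [Equiv.symm_apply_apply, finSuccEquivLast_symm_some] at h3
    exact congrArg Fin.val h3

lemma sum_fix (n : ℕ) :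
    ∑ σ ∈ univ.filter (fun σ : Equiv.Perm (Fin (n + 1)) => σ (Fin.last n) = Fin.last n),
      sgn σ = F n := by
  rw [F]
  symm
  apply Finset.sum_bij (fun π _ => ext π)
  · intro π _
    simp [ext_last]
  · intro π _ π' _ h
    have : ∀ x, ext π (Fin.castSucc x) = ext π' (Fin.castSucc x) := fun x => by rw [h]
    ext x
    have := this x
    rw [ext_castSucc, ext_castSucc] at this
    exact congrArg Fin.val (Fin.castSucc_injective n this)
  · intro σ hσ
    simp only [mem_filter, mem_univ, true_and] at hσ
    obtain ⟨π, hπ⟩ := ext_surj σ hσ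
    exact ⟨π, mem_univ π, hπ⟩
  · intro π _
    exact (sgn_ext π).symm


section Swap
variable {n : ℕ}

def mm : Fin (n + 2) := ⟨n, by omega⟩
def MM : Fin (n + 2) := Fin.last (n + 1)

def tt : Equiv.Perm (Fin (n + 2)) := Equiv.swap mm MM

lemma pointwise (σ : Equiv.Perm (Fin (n + 2))) (p : Fin (n + 2) × Fin (n + 2))
    (h1 : p ≠ (σ.symm MM, σ.symm mm)) (h2 : p ≠ (σ.symm mm, σ.symm MM)) :
    crp ((tt * σ : Equiv.Perm (Fin (n+2)))) p ↔ crp σ p := by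
  obtain ⟨i, j⟩ := p
  have hmM : (mm : Fin (n+2)) ≠ MM := by
    simp [mm, MM, Fin.ext_iff, Fin.last]
  -- value computations
  have key : ∀ x : Fin (n + 2), ((tt * σ : Equiv.Perm (Fin (n+2)))) x = tt (σ x) := fun x =>
    Equiv.Perm.mul_apply tt σ x
  have hswap : ∀ y : Fin (n + 2), y ≠ mm → y ≠ MM → tt y = y := fun y hy1 hy2 =>
    Equiv.swap_apply_of_ne_of_ne hy1 hy2
  have hvale : ∀ x : Fin (n+2), x ≠ σ.symm MM → x ≠ σ.symm mm → (σ x ≠ MM ∧ σ x ≠ mm) := by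
    intro x hx1 hx2
    constructor
    · intro h; exact hx1 (by rw [← h]; simp)
    · intro h; exact hx2 (by rw [← h]; simp)
  simp only [ne_eq, Prod.mk.injEq, not_and_or] at h1 h2
  by_cases hia : i = σ.symm MM
  · -- σ i = MM, (ttσ) i = mm
    have hσi : σ i = MM := by rw [hia]; simp
    have hti : ((tt * σ : Equiv.Perm (Fin (n+2)))) i = mm := by rw [key, hσi, tt, Equiv.swap_apply_right]
    have hjb : j ≠ σ.symm mm := by
      rcases h1 with h | h
      · exact absurd hia h
      · exact h
    by_cases hja : j = σ.symm MM
    · -- i = j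
      have : i = j := hia.trans hja.symm
      subst this
      simp [crp]
    · have hj := hvale j hja hjb
      have hσj : ((tt * σ : Equiv.Perm (Fin (n+2)))) j = σ j := by rw [key, hswap _ hj.2 hj.1]
      have hb1 : (σ j).val < n := by
        have := (σ j).isLt
        have e1 : (σ j).val ≠ n := fun h => hj.2 (Fin.ext h)
        have e2 : (σ j).val ≠ n + 1 := fun h => hj.1 (Fin.ext h)
        omega
      simp only [crp, hti, hσi, hσj, Fin.lt_def, Fin.le_def]
      show (_ ∨ _) ↔ (_ ∨ _)
      simp only [mm, MM, Fin.last]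
      constructor <;> intro h <;> [skip; skip] <;> omega
  · by_cases hib : i = σ.symm mm
    · -- σ i = mm, (ttσ) i = MM
      have hσi : σ i = mm := by rw [hib]; simp
      have hti : ((tt * σ : Equiv.Perm (Fin (n+2)))) i = MM := by rw [key, hσi, tt, Equiv.swap_apply_left]
      have hjb : j ≠ σ.symm MM := by
        rcases h2 with h | h
        · exact absurd hib h
        · exact h
      by_cases hja : j = σ.symm mm
      · have : i = j := hib.trans hja.symm
        subst this
        simp [crp]
      · have hj := hvale j hjb hja
        have hσj : ((tt * σ : Equiv.Perm (Fin (n+2)))) j = σ j := by rw [key, hswap _ hj.2 hj.1]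
        have hb1 : (σ j).val < n := by
          have := (σ j).isLt
          have e1 : (σ j).val ≠ n := fun h => hj.2 (Fin.ext h)
          have e2 : (σ j).val ≠ n + 1 := fun h => hj.1 (Fin.ext h)
          omega
        simp only [crp, hti, hσi, hσj, Fin.lt_def, Fin.le_def]
        simp only [mm, MM, Fin.last]
        constructor <;> intro h <;> [skip; skip] <;> omega
    · have hi := hvale i hia hib
      have hσi : ((tt * σ : Equiv.Perm (Fin (n+2)))) i = σ i := by rw [key, hswap _ hi.2 hi.1]
      have hb1 : (σ i).val < n := by
        have := (σ i).isLt
        have e1 : (σ i).val ≠ n := fun h => hi.2 (Fin.ext h)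
        have e2 : (σ i).val ≠ n + 1 := fun h => hi.1 (Fin.ext h)
        omega
      by_cases hja : j = σ.symm MM
      · have hσj : σ j = MM := by rw [hja]; simp
        have htj : ((tt * σ : Equiv.Perm (Fin (n+2)))) j = mm := by rw [key, hσj, tt, Equiv.swap_apply_right]
        have hiv : i.val ≤ n + 1 := by omega
        simp only [crp, hσi, hσj, htj, Fin.lt_def, Fin.le_def]
        simp only [mm, MM, Fin.last]
        have hjv : j.val < n + 2 := j.isLt
        constructor <;> intro h <;> [skip; skip] <;> omega
      · by_cases hjb : j = σ.symm mm
        · have hσj : σ j = mm := by rw [hjb]; simp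
          have htj : ((tt * σ : Equiv.Perm (Fin (n+2)))) j = MM := by rw [key, hσj, tt, Equiv.swap_apply_left]
          have hiv : i.val < n + 2 := i.isLt
          simp only [crp, hσi, hσj, htj, Fin.lt_def, Fin.le_def]
          simp only [mm, MM, Fin.last]
          constructor <;> intro h <;> [skip; skip] <;> omega
        · have hj := hvale j hja hjb
          have hσj : ((tt * σ : Equiv.Perm (Fin (n+2)))) j = σ j := by rw [key, hswap _ hj.2 hj.1]
          rw [crp, crp, hσi, hσj]


lemma sgn_prod {N : ℕ} (σ : Equiv.Perm (Fin N)) :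
    sgn σ = ∏ p : Fin N × Fin N, (if crp σ p then (-1 : ℤ) else 1) := by
  rw [sgn, ← Finset.prod_const, Finset.prod_filter]

lemma sgn_swap_mul (σ : Equiv.Perm (Fin (n + 2))) :
    sgn (tt * σ) = if σ MM = MM ∨ σ MM = mm then sgn σ else - sgn σ := by
  set a := σ.symm MM with ha
  set b := σ.symm mm with hb
  have hmM : (mm : Fin (n + 2)) ≠ MM := by simp [mm, MM, Fin.ext_iff, Fin.last]
  have hσa : σ a = MM := Equiv.apply_symm_apply σ MM
  have hσb : σ b = mm := Equiv.apply_symm_apply σ mm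
  have hab : a ≠ b := fun h => hmM (by rw [← hσb, ← h, hσa])
  have hta : ((tt * σ : Equiv.Perm (Fin (n+2)))) a = mm := by
    rw [Equiv.Perm.mul_apply, hσa, tt, Equiv.swap_apply_right]
  have htb : ((tt * σ : Equiv.Perm (Fin (n+2)))) b = MM := by
    rw [Equiv.Perm.mul_apply, hσb, tt, Equiv.swap_apply_left]
  have hmem1 : ((a, b) : Fin (n+2) × Fin (n+2)) ∈ (univ : Finset (Fin (n+2) × Fin (n+2))) :=
    mem_univ _
  have hne : ((b, a) : Fin (n+2) × Fin (n+2)) ≠ (a, b) := by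
    simp only [ne_eq, Prod.mk.injEq, not_and_or]
    exact Or.inl hab.symm
  have hmem2 : ((b, a) : Fin (n+2) × Fin (n+2)) ∈
      (univ : Finset (Fin (n+2) × Fin (n+2))).erase (a, b) :=
    mem_erase.mpr ⟨hne, mem_univ _⟩
  have expand : ∀ τ : Equiv.Perm (Fin (n + 2)),
      sgn τ = (if crp τ (a, b) then (-1 : ℤ) else 1) *
        ((if crp τ (b, a) then (-1 : ℤ) else 1) *
          ∏ p ∈ ((univ : Finset (Fin (n+2) × Fin (n+2))).erase (a, b)).erase (b, a),
            (if crp τ p then (-1 : ℤ) else 1)) := by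
    intro τ
    rw [sgn_prod, ← Finset.mul_prod_erase _ _ hmem1, ← Finset.mul_prod_erase _ _ hmem2]
  have tail_eq :
      (∏ p ∈ ((univ : Finset (Fin (n+2) × Fin (n+2))).erase (a, b)).erase (b, a),
        (if crp ((tt * σ : Equiv.Perm (Fin (n+2)))) p then (-1 : ℤ) else 1)) =
      ∏ p ∈ ((univ : Finset (Fin (n+2) × Fin (n+2))).erase (a, b)).erase (b, a),
        (if crp σ p then (-1 : ℤ) else 1) := by
    refine Finset.prod_congr rfl fun p hp => ?_
    have h2 := (mem_erase.mp hp).1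
    have h1 := (mem_erase.mp (mem_erase.mp hp).2).1
    exact if_congr (pointwise σ p h1 h2) rfl rfl
  -- compute the four head values
  have hMMlt : ∀ x : Fin (n + 2), ¬ (MM < x) := fun x => not_lt.mpr (Fin.le_last x)
  have hmmMM : (mm : Fin (n + 2)) < MM := by
    simp only [mm, MM, Fin.lt_def, Fin.last]; omega
  have c1 : crp ((tt * σ : Equiv.Perm (Fin (n+2)))) (a, b) ↔ a < b ∧ b ≤ mm := by
    simp only [crp, hta, htb]
    constructor
    · rintro (⟨h1, h2, _⟩ | ⟨_, h2, _⟩)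
      · exact ⟨h1, h2⟩
      · exact absurd h2 (hMMlt a)
    · rintro ⟨h1, h2⟩
      exact Or.inl ⟨h1, h2, hmmMM⟩
  have c2 : ¬ crp ((tt * σ : Equiv.Perm (Fin (n+2)))) (b, a) := by
    simp only [crp, hta, htb]
    rintro (⟨_, _, h3⟩ | ⟨h1, _, _⟩)
    · exact absurd h3 (hMMlt mm)
    · exact absurd h1 (hMMlt mm)
  have d1 : ¬ crp σ (a, b) := by
    simp only [crp, hσa, hσb]
    rintro (⟨_, _, h3⟩ | ⟨h1, _, _⟩)
    · exact absurd h3 (hMMlt mm)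
    · exact absurd h1 (hMMlt mm)
  have d2 : crp σ (b, a) ↔ b < a ∧ a ≤ mm := by
    simp only [crp, hσa, hσb]
    constructor
    · rintro (⟨h1, h2, _⟩ | ⟨_, h2, _⟩)
      · exact ⟨h1, h2⟩
      · exact absurd h2 (hMMlt b)
    · rintro ⟨h1, h2⟩
      exact Or.inl ⟨h1, h2, hmmMM⟩
  have haiff : a = MM ↔ σ MM = MM := by
    rw [ha, Equiv.symm_apply_eq, eq_comm]
  have hbiff : b = MM ↔ σ MM = mm := by
    rw [hb, Equiv.symm_apply_eq, eq_comm]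
  rw [expand ((tt * σ : Equiv.Perm (Fin (n+2)))), expand σ, tail_eq, if_neg c2, if_neg d1]
  by_cases hc : σ MM = MM ∨ σ MM = mm
  · rw [if_pos hc]
    have h1 : ¬(a < b ∧ b ≤ mm) ∧ ¬(b < a ∧ a ≤ mm) := by
      rcases hc with hc | hc
      · have haM : a = MM := haiff.mpr hc
        constructor
        · rintro ⟨h, _⟩; rw [haM] at h; exact hMMlt b h
        · rintro ⟨_, h⟩; rw [haM] at h
          exact absurd (lt_of_le_of_lt h hmmMM) (lt_irrefl MM)
      · have hbM : b = MM := hbiff.mpr hc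
        constructor
        · rintro ⟨_, h⟩; rw [hbM] at h
          exact absurd (lt_of_le_of_lt h hmmMM) (lt_irrefl MM)
        · rintro ⟨h, _⟩; rw [hbM] at h; exact hMMlt a h
    rw [if_neg (fun h => h1.1 (c1.mp h)), if_neg (fun h => h1.2 (d2.mp h))]
  · rw [if_neg hc]
    push_neg at hc
    have haM : a ≠ MM := fun h => hc.1 (haiff.mp h)
    have hbM : b ≠ MM := fun h => hc.2 (hbiff.mp h)
    have haMv : a.val ≠ n + 1 := fun h => haM (Fin.ext (by simpa [MM, Fin.last] using h))
    have hbMv : b.val ≠ n + 1 := fun h => hbM (Fin.ext (by simpa [MM, Fin.last] using h))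
    have ham : a ≤ mm := by
      have h2 := a.isLt
      simp only [Fin.le_def, mm]; omega
    have hbm : b ≤ mm := by
      have h2 := b.isLt
      simp only [Fin.le_def, mm]; omega
    rcases lt_or_gt_of_ne hab with h | h
    · rw [if_pos (c1.mpr ⟨h, hbm⟩), if_neg (fun hx => absurd (d2.mp hx).1 (asymm h))]
      ring
    · rw [if_neg (fun hx => absurd (c1.mp hx).1 (asymm h)), if_pos (d2.mpr ⟨h, ham⟩)]
      ring


lemma tt_mul_tt_mul (σ : Equiv.Perm (Fin (n + 2))) : tt * (tt * σ) = σ := by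
  rw [← mul_assoc, tt, Equiv.swap_mul_self, one_mul]

lemma step (n : ℕ) : F (n + 2) = 2 * F (n + 1) := by
  have hswapsum : ∑ σ : Equiv.Perm (Fin (n + 2)), sgn ((tt * σ : Equiv.Perm (Fin (n+2))))
      = F (n + 2) := by
    rw [F]
    exact Fintype.sum_bijective (fun σ => tt * σ) (Group.mulLeft_bijective tt)
      (fun σ => sgn ((tt * σ : Equiv.Perm (Fin (n+2))))) sgn (fun σ => rfl)
  have h2F : 2 * F (n + 2) =
      ∑ σ : Equiv.Perm (Fin (n + 2)), (sgn σ + sgn ((tt * σ : Equiv.Perm (Fin (n+2))))) := by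
    rw [Finset.sum_add_distrib, hswapsum, F, two_mul]
  rw [← Finset.sum_filter_add_sum_filter_not univ
    (fun σ : Equiv.Perm (Fin (n + 2)) => σ MM = MM ∨ σ MM = mm)] at h2F
  have hzero : ∑ σ ∈ univ.filter
      (fun σ : Equiv.Perm (Fin (n + 2)) => ¬(σ MM = MM ∨ σ MM = mm)),
      (sgn σ + sgn ((tt * σ : Equiv.Perm (Fin (n+2))))) = 0 := by
    refine Finset.sum_eq_zero fun σ hσ => ?_
    have := (mem_filter.mp hσ).2
    rw [sgn_swap_mul, if_neg this]
    ring
  have hdouble : ∑ σ ∈ univ.filter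
      (fun σ : Equiv.Perm (Fin (n + 2)) => σ MM = MM ∨ σ MM = mm),
      (sgn σ + sgn ((tt * σ : Equiv.Perm (Fin (n+2))))) =
      2 * ∑ σ ∈ univ.filter
        (fun σ : Equiv.Perm (Fin (n + 2)) => σ MM = MM ∨ σ MM = mm), sgn σ := by
    rw [Finset.mul_sum]
    refine Finset.sum_congr rfl fun σ hσ => ?_
    have := (mem_filter.mp hσ).2
    rw [sgn_swap_mul, if_pos this]
    ring
  rw [hzero, add_zero, hdouble] at h2F
  -- split the filter
  have hsplit : ∑ σ ∈ univ.filter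
      (fun σ : Equiv.Perm (Fin (n + 2)) => σ MM = MM ∨ σ MM = mm), sgn σ =
      (∑ σ ∈ univ.filter (fun σ : Equiv.Perm (Fin (n + 2)) => σ MM = MM), sgn σ) +
      ∑ σ ∈ univ.filter (fun σ : Equiv.Perm (Fin (n + 2)) => σ MM = mm), sgn σ := by
    rw [← Finset.sum_union]
    · congr 1
      rw [← Finset.filter_or]
    · rw [Finset.disjoint_filter]
      intro σ _ h1 h2
      have hmM : (mm : Fin (n + 2)) ≠ MM := by simp [mm, MM, Fin.ext_iff, Fin.last]
      exact hmM (h2.symm.trans h1)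
  have hclass : ∑ σ ∈ univ.filter (fun σ : Equiv.Perm (Fin (n + 2)) => σ MM = mm), sgn σ =
      ∑ σ ∈ univ.filter (fun σ : Equiv.Perm (Fin (n + 2)) => σ MM = MM), sgn σ := by
    refine Finset.sum_nbij' (fun σ => tt * σ) (fun σ => tt * σ) ?_ ?_ ?_ ?_ ?_
    · intro σ hσ
      simp only [mem_filter, mem_univ, true_and] at hσ ⊢
      show tt (σ MM) = MM
      rw [hσ, tt, Equiv.swap_apply_left]
    · intro σ hσ
      simp only [mem_filter, mem_univ, true_and] at hσ ⊢
      show tt (σ MM) = mm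
      rw [hσ, tt, Equiv.swap_apply_right]
    · intro σ _; exact tt_mul_tt_mul σ
    · intro σ _; exact tt_mul_tt_mul σ
    · intro σ hσ
      simp only [mem_filter, mem_univ, true_and] at hσ
      rw [sgn_swap_mul, if_pos (Or.inr hσ)]
  have hfix : ∑ σ ∈ univ.filter (fun σ : Equiv.Perm (Fin (n + 2)) => σ MM = MM), sgn σ =
      F (n + 1) := sum_fix (n + 1)
  rw [hsplit, hclass, hfix] at h2F
  have : (2 : ℤ) * F (n + 2) = 2 * (2 * F (n + 1)) := by rw [h2F]; ring
  exact mul_left_cancel₀ two_ne_zero this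

end Swap

lemma F_one : F 1 = 1 := by decide

lemma F_succ (k : ℕ) : F (k + 1) = 2 ^ k := by
  induction k with
  | zero => exact F_one
  | succ m ih => rw [step, ih]; ring

end CrossAux

/-- The generating function of the number-of-crossings statistic on `S_n`
evaluated at `q = -1` equals `2^(n-1)`. A crossing of `σ` is a pair `(i,j)`
with `i < j ≤ σ(i) < σ(j)` or `σ(i) < σ(j) < i < j`. -/
theorem crossings_q_eq_neg_one (n : ℕ) (hn : 0 < n) :
    ∑ σ : Equiv.Perm (Fin n),
      (-1 : ℤ) ^ (univ.filter (fun p : Fin n × Fin n =>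
        (p.1 < p.2 ∧ p.2 ≤ σ p.1 ∧ σ p.1 < σ p.2) ∨
        (σ p.1 < σ p.2 ∧ σ p.2 < p.1 ∧ p.1 < p.2))).card
      = 2 ^ (n - 1) := by
  obtain ⟨k, rfl⟩ : ∃ k, n = k + 1 := ⟨n - 1, (Nat.succ_pred_eq_of_pos hn).symm⟩
  have key := CrossAux.F_succ k
  rw [CrossAux.F] at key
  have heq : ∀ σ : Equiv.Perm (Fin (k + 1)), CrossAux.sgn σ =
      (-1 : ℤ) ^ (univ.filter (fun p : Fin (k+1) × Fin (k+1) =>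
        (p.1 < p.2 ∧ p.2 ≤ σ p.1 ∧ σ p.1 < σ p.2) ∨
        (σ p.1 < σ p.2 ∧ σ p.2 < p.1 ∧ p.1 < p.2))).card := by
    intro σ
    rw [CrossAux.sgn]
    congr 1
  simp only [Nat.add_sub_cancel]
  rw [← key]
  exact Finset.sum_congr rfl fun σ _ => (heq σ).symm
end

section
/- For every positive integer n, the sum over all permutations σ of [n] of (-1) raised to the number of occurrences of the vincular pattern 13-2 in σ equals 2^(n-1). (This is the q = -1 evaluation of the generating function of the number of occurrences of 13-2, showing it exhibits the cyclic sieving phenomenon for involutions with 2^(n-1) fixed points.) -/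
/-!
Split a permutation of `Fin (n + 1)` into its first value `v` and the standardization `τ` of the
remaining values. Occurrences of `13-2` not starting at position `0` are exactly those of `τ`;
those starting at `0` correspond to the later values lying between `v` and the second value, and
there are `τ 0 - v` of them. So the signed sums `G n v` over permutations with first value `v`
satisfy `G (n + 1) v = ∑ t, (-1) ^ (t - v) * G n t`, and by induction `G (m + 1) t` is `2 ^ m` for
the two largest `t` and `0` for the others.
-/

open Finset Equiv

variable {α : Type*} [LinearOrder α] {n : ℕ}

-- An occurrence `(i, k)` uses positions `i, i + 1, k`; taking `i : Fin n` makes `i + 1` a position.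
def occ13_2 (f : Fin (n + 1) → α) : ℕ :=
  #{p : Fin n × Fin (n + 1) | p.1.succ < p.2 ∧ f p.1.castSucc < f p.2 ∧ f p.2 < f p.1.succ}

lemma card_occurrences_eq_occ13_2 (f : Fin (n + 1) → α) :
    #{p : Fin (n + 1) × Fin (n + 1) | ∃ i1 : Fin (n + 1), (i1 : ℕ) = (p.1 : ℕ) + 1 ∧ i1 < p.2 ∧
      f p.1 < f p.2 ∧ f p.2 < f i1} = occ13_2 f := by
  have val_eq_succ (i : Fin n) (j : Fin (n + 1)) : (j : ℕ) = i + 1 ↔ j = i.succ := by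
    simp [Fin.ext_iff]
  have val_ne_last (j : Fin (n + 1)) : (j : ℕ) ≠ n + 1 := j.isLt.ne
  rw [occ13_2, card_filter, card_filter, Fintype.sum_prod_type, Fintype.sum_prod_type,
    Fin.sum_univ_castSucc]
  simp [val_eq_succ, val_ne_last]

lemma occ13_2_comp_strictMono {β : Type*} [LinearOrder β] {g : α → β} (hg : StrictMono g)
    (f : Fin (n + 1) → α) : occ13_2 (g ∘ f) = occ13_2 f := by
  simp only [occ13_2, Function.comp_apply, hg.lt_iff_lt]

lemma occ13_2_cons (a : α) (f : Fin (n + 1) → α) :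
    occ13_2 (Fin.cons a f : Fin (n + 2) → α) =
      #{k : Fin n | a < f k.succ ∧ f k.succ < f 0} + occ13_2 f := by
  simp only [occ13_2, card_filter, Fintype.sum_prod_type, Fin.sum_univ_succ (n := n),
    Fin.sum_univ_succ (n := n + 1)]
  simp [Fin.succ_lt_succ_iff, Fin.succ_zero_eq_one, Fin.one_lt_succ_succ]

def permCons (v : Fin (n + 1)) (τ : Perm (Fin n)) : Perm (Fin (n + 1)) :=
  (finSuccEquiv n).trans (τ.optionCongr.trans (finSuccEquiv' v).symm)

lemma coe_permCons (v : Fin (n + 1)) (τ : Perm (Fin n)) :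
    ⇑(permCons v τ) = Fin.cons v (v.succAbove ∘ τ) := by
  ext j
  cases j using Fin.cases <;> simp [permCons, finSuccEquiv'_symm_some]

@[simp] lemma permCons_zero (v : Fin (n + 1)) (τ : Perm (Fin n)) : permCons v τ 0 = v := by
  simp [coe_permCons]

lemma permCons_injective :
    Function.Injective fun x : Fin (n + 1) × Perm (Fin n) ↦ permCons x.1 x.2 := by
  rintro ⟨v, τ⟩ ⟨w, ρ⟩ h
  have hv : v = w := by simpa using congr($h 0)
  subst hv
  refine Prod.ext rfl (Equiv.ext fun j ↦ ?_)
  simpa [coe_permCons] using congr($h j.succ)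

noncomputable def permConsEquiv : Fin (n + 1) × Perm (Fin n) ≃ Perm (Fin (n + 1)) :=
  Equiv.ofBijective _ <| (Fintype.bijective_iff_injective_and_card _).2
    ⟨permCons_injective, by simp [Fintype.card_perm, Nat.factorial_succ]⟩

lemma sum_perm_eq_sum_permCons {M : Type*} [AddCommMonoid M] (g : Perm (Fin (n + 1)) → M) :
    ∑ σ, g σ = ∑ v, ∑ τ, g (permCons v τ) := by
  rw [← Fintype.sum_prod_type']
  exact (Fintype.sum_equiv permConsEquiv _ _ fun _ ↦ rfl).symm

lemma card_filter_le_castSucc_lt (v : Fin (n + 2)) (t : Fin (n + 1)) :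
    #{x : Fin (n + 1) | v ≤ x.castSucc ∧ x < t} = t - v := by
  rw [← Nat.card_Ico, ← card_map Fin.valEmbedding]
  congr 1
  ext m
  simp only [mem_map, mem_filter, mem_univ, true_and, Fin.valEmbedding_apply, mem_Ico, Fin.le_def,
    Fin.lt_def, Fin.val_castSucc]
  constructor
  · rintro ⟨x, hx, rfl⟩
    exact hx
  · intro hm
    exact ⟨⟨m, by omega⟩, hm, rfl⟩

lemma occ13_2_permCons (v : Fin (n + 2)) (τ : Perm (Fin (n + 1))) :
    occ13_2 (permCons v τ) = occ13_2 τ + (τ 0 - v) := by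
  rw [coe_permCons, occ13_2_cons, occ13_2_comp_strictMono (Fin.strictMono_succAbove v), add_comm]
  congr 1
  simp only [Function.comp_apply, Fin.lt_succAbove_iff_le_castSucc, Fin.succAbove_lt_succAbove_iff]
  calc #{k : Fin n | v ≤ (τ k.succ).castSucc ∧ τ k.succ < τ 0}
      = #{k : Fin (n + 1) | v ≤ (τ k).castSucc ∧ τ k < τ 0} := by
        rw [Fin.card_filter_univ_succ, if_neg fun h ↦ lt_irrefl _ h.2]
    _ = #{x : Fin (n + 1) | v ≤ x.castSucc ∧ x < τ 0} := card_equiv τ (by simp)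
    _ = τ 0 - v := card_filter_le_castSucc_lt v (τ 0)

def signSumFirst (n : ℕ) (v : Fin (n + 1)) : ℤ :=
  ∑ τ : Perm (Fin n), (-1) ^ occ13_2 (permCons v τ)

lemma sum_neg_one_pow_occ13_2 (n : ℕ) :
    ∑ σ : Perm (Fin (n + 1)), (-1 : ℤ) ^ occ13_2 σ = ∑ v, signSumFirst n v :=
  sum_perm_eq_sum_permCons _

lemma signSumFirst_zero (v : Fin 1) : signSumFirst 0 v = 1 := by
  simp [signSumFirst, occ13_2]

lemma signSumFirst_succ (v : Fin (n + 2)) :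
    signSumFirst (n + 1) v = ∑ t : Fin (n + 1), (-1) ^ ((t : ℕ) - v) * signSumFirst n t := by
  calc signSumFirst (n + 1) v
      = ∑ τ : Perm (Fin (n + 1)), (-1) ^ ((τ 0 : ℕ) - v) * (-1) ^ occ13_2 τ := by
        simp only [signSumFirst, occ13_2_permCons, pow_add, mul_comm]
    _ = ∑ t : Fin (n + 1), (-1) ^ ((t : ℕ) - v) * signSumFirst n t := by
        simp only [sum_perm_eq_sum_permCons, permCons_zero, signSumFirst, mul_sum]

lemma sum_ite_le_val {M : Type*} [AddCommMonoid M] (m : ℕ) (f : Fin (m + 2) → M) :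
    ∑ t : Fin (m + 2), (if m ≤ (t : ℕ) then f t else 0) =
      f (Fin.last m).castSucc + f (Fin.last (m + 1)) := by
  have h (x : Fin m) : ¬ m ≤ (x : ℕ) := not_le.2 x.isLt
  simp [Fin.sum_univ_castSucc, h]

lemma signSumFirst_succ_eq (m : ℕ) (t : Fin (m + 2)) :
    signSumFirst (m + 1) t = if m ≤ (t : ℕ) then 2 ^ m else 0 := by
  induction m with
  | zero => simp [signSumFirst_succ, signSumFirst_zero]
  | succ m ih =>
    rw [signSumFirst_succ]
    simp_rw [ih, mul_ite, mul_zero]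
    rw [sum_ite_le_val, Fin.val_castSucc, Fin.val_last, Fin.val_last]
    split_ifs with ht
    · rw [Nat.sub_eq_zero_of_le (by omega), Nat.sub_eq_zero_of_le ht]
      ring
    · rw [show m + 1 - t = m - t + 1 by omega, pow_succ]
      ring

theorem pattern_13_2_q_eq_neg_one_general (n : ℕ) :
    ∑ σ : Equiv.Perm (Fin n),
      (-1 : ℤ) ^ (univ.filter (fun p : Fin n × Fin n =>
        ∃ i1 : Fin n, (i1 : ℕ) = (p.1 : ℕ) + 1 ∧ i1 < p.2 ∧
          σ p.1 < σ p.2 ∧ σ p.2 < σ i1)).card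
      = 2 ^ (n - 1) := by
  cases n with
  | zero => simp -- `Perm (Fin 0)` is a singleton and `2 ^ (0 - 1) = 1`
  | succ n =>
    simp only [card_occurrences_eq_occ13_2, sum_neg_one_pow_occ13_2, Nat.add_sub_cancel]
    cases n with
    | zero => simp [signSumFirst_zero]
    | succ m =>
      simp only [signSumFirst_succ_eq, sum_ite_le_val]
      ring

/-- The generating function of the number of occurrences of the vincular
pattern `13-2` on `S_n` evaluated at `q = -1` equals `2^(n-1)`. An occurrence
is a pair of indices `(i,k)` with `i+1 < k` and `σ i < σ k < σ (i+1)`. -/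
theorem pattern_13_2_q_eq_neg_one (n : ℕ) (hn : 0 < n) :
    ∑ σ : Equiv.Perm (Fin n),
      (-1 : ℤ) ^ (univ.filter (fun p : Fin n × Fin n =>
        ∃ i1 : Fin n, (i1 : ℕ) = (p.1 : ℕ) + 1 ∧ i1 < p.2 ∧
          σ p.1 < σ p.2 ∧ σ p.2 < σ i1)).card
      = 2 ^ (n - 1) :=
  pattern_13_2_q_eq_neg_one_general n
end

section
/- For every positive integer n, the sum over all permutations σ of [n] of (-1) raised to the cycle descent number of σ equals 2^(n-1). (This is the q = -1 evaluation of the generating function of the cycle descent number, showing it exhibits the cyclic sieving phenomenon for involutions with 2^(n-1) fixed points.) -/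
/-!
Up to the sign of `σ`, `(-1) ^ cdes σ` is `(-1) ^ exc σ`, where `exc σ` counts the excedances
`x < σ x`. Indeed the descents `σ x < x` that are not cycle descents are exactly those with `σ x`
the minimum of a nontrivial cycle, so `cdes σ + #cycles = #descents = #support - exc σ`, while
`sign σ = (-1) ^ (#support + #cycles)`. Hence the sum is the determinant of the matrix with `-1`
strictly below the diagonal and `1` elsewhere; subtracting the second row from the first and
expanding shows that this determinant is `2 ^ (n - 1)`.
-/

open Finset

namespace Matrix

theorem det_of_ite_lt {R : Type*} [CommRing R] (a b : R) (n : ℕ) :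
    (of fun i j : Fin (n + 1) => if j < i then a else b).det = b * (b - a) ^ n := by
  induction n with
  | zero => simp
  | succ n ih =>
    set M := of fun i j : Fin (n + 2) => if j < i then a else b
    have hrow : M 0 + (-1 : R) • M 1 = Pi.single 0 (b - a) := by
      ext j
      cases j using Fin.cases <;> simp [M, Fin.succ_ne_zero, sub_eq_add_neg]
    have hminor : (updateRow M 0 (Pi.single 0 (b - a))).submatrix Fin.succ (Fin.succAbove 0)
        = of fun i j : Fin (n + 1) => if j < i then a else b := by
      ext i j
      simp [M]
    rw [← det_updateRow_add_smul_self M zero_ne_one, hrow, det_succ_row_zero,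
      Fintype.sum_eq_single 0 fun j hj => by simp [hj], hminor, ih]
    simp
    ring

end Matrix

namespace Equiv.Perm

theorem sign_eq_neg_one_pow_card_support_add_card_cycleFactorsFinset {α : Type*} [Fintype α]
    [DecidableEq α] (σ : Perm α) :
    sign σ = (-1 : ℤˣ) ^ (#σ.support + #σ.cycleFactorsFinset) := by
  rw [sign_of_cycleType, sum_cycleType, cycleType_def, Multiset.card_map]
  rfl

variable {α : Type*} [Fintype α] [LinearOrder α] (σ : Perm α)

def cycleDescents : Finset α :=
  {x | σ x < x ∧ ∃ y, σ.SameCycle x y ∧ y < σ x}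

def excedances : Finset α :=
  {x | x < σ x}

def cycleMins : Finset α :=
  {x ∈ σ.support | ∀ y, σ.SameCycle x y → x ≤ y}

theorem card_cycleMins : #σ.cycleMins = #σ.cycleFactorsFinset := by
  refine card_bij (fun x _ => σ.cycleOf x) (fun x hx => ?_) (fun x hx x' hx' hxx' => ?_)
    fun c hc => ?_
  · exact cycleOf_mem_cycleFactorsFinset_iff.mpr (mem_filter.mp hx).1
  · simp only [cycleMins, mem_filter, mem_support] at hx hx'
    have hsame : σ.SameCycle x x' := by
      rw [← mem_support_cycleOf_iff' hx.1, hxx', mem_support_cycleOf_iff' hx'.1]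
    exact le_antisymm (hx.2 x' hsame) (hx'.2 x hsame.symm)
  · have hne : c.support.Nonempty := (mem_cycleFactorsFinset_iff.mp hc).1.nonempty_support
    have hmin := c.support.min'_mem hne
    have hc' : c = σ.cycleOf (c.support.min' hne) := cycle_is_cycleOf hmin hc
    refine ⟨c.support.min' hne, ?_, hc'.symm⟩
    have hsupp := mem_cycleFactorsFinset_support_le hc hmin
    refine mem_filter.mpr ⟨hsupp, fun y hy => c.support.min'_le y ?_⟩
    rwa [hc', mem_support_cycleOf_iff' (mem_support.mp hsupp)]

theorem card_filter_apply_lt_add_card_excedances :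
    #{x | σ x < x} + #σ.excedances = #σ.support := by
  rw [excedances, ← card_union_of_disjoint (disjoint_filter.mpr fun x _ h => h.not_gt),
    ← filter_or]
  congr 1
  ext x
  simp [or_comm, eq_comm]

variable {σ} in
theorem apply_mem_cycleMins_iff {x : α} (hx : σ x ≠ x) :
    σ x ∈ σ.cycleMins ↔ ∀ y, σ.SameCycle x y → σ x ≤ y := by
  simp [cycleMins, hx, sameCycle_apply_left]

theorem card_filter_apply_mem_cycleMins :
    #{x | σ x < x ∧ σ x ∈ σ.cycleMins} = #σ.cycleMins := by
  refine card_nbij' σ ⇑σ⁻¹ (fun x hx => (mem_filter.mp hx).2.2) (fun y hy => ?_)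
    (fun x _ => by simp) (fun y _ => by simp)
  have hy' := mem_filter.mp hy
  have hlt : y < σ⁻¹ y := by
    refine lt_of_le_of_ne (hy'.2 _ ⟨-1, by simp⟩) fun h => ?_
    exact mem_support.mp hy'.1 (inv_eq_iff_eq.mp h.symm).symm
  simpa [mem_coe.mp hy] using hlt

theorem card_cycleDescents_add_card_cycleMins :
    #σ.cycleDescents + #σ.cycleMins = #{x | σ x < x} := by
  rw [← card_filter_apply_mem_cycleMins, ← filter_filter, add_comm,
    ← card_filter_add_card_filter_not (s := {x | σ x < x}) (fun x => σ x ∈ σ.cycleMins)]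
  congr 2
  ext x
  simp only [cycleDescents, mem_filter, mem_univ, true_and]
  refine and_congr_right fun hlt => ?_
  rw [apply_mem_cycleMins_iff hlt.ne]
  simp only [not_forall, not_le, exists_prop]

theorem neg_one_pow_card_cycleDescents :
    (-1 : ℤ) ^ #σ.cycleDescents = sign σ * (-1) ^ #σ.excedances := by
  have hdes := card_cycleDescents_add_card_cycleMins σ
  have hsupp := card_filter_apply_lt_add_card_excedances σ
  rw [card_cycleMins] at hdes
  have hparity : #σ.support + #σ.cycleFactorsFinset + #σ.excedances
      = #σ.cycleDescents + 2 * (#σ.cycleFactorsFinset + #σ.excedances) := by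
    omega
  rw [sign_eq_neg_one_pow_card_support_add_card_cycleFactorsFinset, Units.val_pow_eq_pow_val,
    Units.val_neg, Units.val_one, ← pow_add, hparity, pow_add, pow_mul]
  simp

theorem sum_neg_one_pow_card_cycleDescents :
    ∑ σ : Perm α, (-1 : ℤ) ^ #σ.cycleDescents
      = (Matrix.of fun i j : α => if j < i then (-1 : ℤ) else 1).det := by
  rw [Matrix.det_apply]
  refine sum_congr rfl fun σ _ => ?_
  rw [neg_one_pow_card_cycleDescents, Units.smul_def, zsmul_eq_mul]
  simp only [Matrix.of_apply]
  rw [prod_ite, prod_const, prod_const, one_pow, mul_one]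
  rfl

end Equiv.Perm

theorem cycle_descent_q_eq_neg_one_general (n : ℕ) :
    ∑ σ : Equiv.Perm (Fin n),
      (-1 : ℤ) ^ (univ.filter (fun x : Fin n =>
        σ x < x ∧ ∃ y : Fin n, σ.SameCycle x y ∧ y < σ x)).card
      = 2 ^ (n - 1) := by
  calc _ = ∑ σ : Equiv.Perm (Fin n), (-1 : ℤ) ^ #σ.cycleDescents := by
        -- the two sides differ only in their `Decidable` instances
        unfold Equiv.Perm.cycleDescents; congr!
    _ = (Matrix.of fun i j : Fin n => if j < i then (-1 : ℤ) else 1).det :=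
      Equiv.Perm.sum_neg_one_pow_card_cycleDescents
    _ = 2 ^ (n - 1) := by
      cases n with
      | zero => simp
      | succ n => simpa using Matrix.det_of_ite_lt (-1 : ℤ) 1 n

/-- The generating function of the cycle descent number on `S_n` evaluated at
`q = -1` equals `2^(n-1)`. The cycle descent number counts elements `x` with
`σ x < x` such that `σ x` is not the minimal element of the cycle of `x`. -/
theorem cycle_descent_q_eq_neg_one (n : ℕ) (hn : 0 < n) :
    ∑ σ : Equiv.Perm (Fin n),
      (-1 : ℤ) ^ (univ.filter (fun x : Fin n =>
        σ x < x ∧ ∃ y : Fin n, σ.SameCycle x y ∧ y < σ x)).card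
      = 2 ^ (n - 1) :=
  cycle_descent_q_eq_neg_one_general n
end

section
/- For every positive integer n, the sum over all permutations σ of [n] of (-1) raised to the number of midpoints of decreasing subsequences of length 3 in σ equals 2^(n-1). (This is the q = -1 evaluation of the generating function of this statistic, showing it exhibits the cyclic sieving phenomenon for involutions with 2^(n-1) fixed points.) -/
open Finset

/-- The set of midpoints of decreasing subsequences of length 3. -/
def Mset {m : ℕ} (σ : Equiv.Perm (Fin m)) : Finset (Fin m) :=
  univ.filter (fun j : Fin m => ∃ i k : Fin m, i < j ∧ j < k ∧ σ j < σ i ∧ σ k < σ j)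

lemma mem_Mset {m : ℕ} {σ : Equiv.Perm (Fin m)} {j : Fin m} :
    j ∈ Mset σ ↔ (∃ i, i < j ∧ σ j < σ i) ∧ (∃ k, j < k ∧ σ k < σ j) := by
  simp only [Mset, mem_filter, mem_univ, true_and]
  constructor
  · rintro ⟨i, k, h1, h2, h3, h4⟩; exact ⟨⟨i, h1, h3⟩, ⟨k, h2, h4⟩⟩
  · rintro ⟨⟨i, h1, h3⟩, ⟨k, h2, h4⟩⟩; exact ⟨i, k, h1, h2, h3, h4⟩

lemma swap01_val {m : ℕ} (a : Fin (m + 2)) :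
    ((Equiv.swap (0 : Fin (m+2)) 1 a : Fin (m+2)) : ℕ) =
      if (a : ℕ) = 0 then 1 else if (a : ℕ) = 1 then 0 else a := by
  rcases eq_or_ne a 0 with rfl | h0
  · simp [Equiv.swap_apply_left]
  rcases eq_or_ne a 1 with rfl | h1
  · simp [Equiv.swap_apply_right, Fin.val_one]
  · rw [Equiv.swap_apply_of_ne_of_ne h0 h1]
    have hv0 : (a : ℕ) ≠ 0 := fun h => h0 (Fin.ext (by simp [h]))
    have hv1 : (a : ℕ) ≠ 1 := fun h => h1 (Fin.ext (by simp [h, Fin.val_one]))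
    simp [hv0, hv1]

lemma swap01_lt_iff {m : ℕ} {a b : Fin (m + 2)} (hb : 1 < b) :
    Equiv.swap (0 : Fin (m+2)) 1 a < b ↔ a < b := by
  have hb' : 1 < (b : ℕ) := by simpa [Fin.lt_def, Fin.val_one] using hb
  rw [Fin.lt_def, Fin.lt_def, swap01_val]
  have e0 : ((0 : Fin (m+2)) : ℕ) = 0 := rfl
  have e1 : ((1 : Fin (m+2)) : ℕ) = 1 := Fin.val_one _
  split_ifs with h1 h2 <;> omega

lemma lt_swap01_iff {m : ℕ} {a b : Fin (m + 2)} (hb : 1 < b) :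
    b < Equiv.swap (0 : Fin (m+2)) 1 a ↔ b < a := by
  have hb' : 1 < (b : ℕ) := by simpa [Fin.lt_def, Fin.val_one] using hb
  rw [Fin.lt_def, Fin.lt_def, swap01_val]
  have e0 : ((0 : Fin (m+2)) : ℕ) = 0 := rfl
  have e1 : ((1 : Fin (m+2)) : ℕ) = 1 := Fin.val_one _
  split_ifs with h1 h2 <;> omega

lemma one_lt_of_ne {m : ℕ} {a : Fin (m + 2)} (h0 : a ≠ 0) (h1 : a ≠ 1) : 1 < a := by
  have hv0 : (a : ℕ) ≠ 0 := fun h => h0 (Fin.ext (by simp [h]))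
  have hv1 : (a : ℕ) ≠ 1 := fun h => h1 (Fin.ext (by simp [h, Fin.val_one]))
  rw [Fin.lt_def, Fin.val_one]; omega

lemma lt_one_iff_eq_zero {m : ℕ} {a : Fin (m + 2)} : a < 1 ↔ a = 0 := by
  rw [Fin.lt_def, Fin.val_one, Nat.lt_one_iff, ← Fin.val_zero (m+2), Fin.val_inj]

/-- Transfer of the midpoint property for positions whose value is at least 2. -/
lemma mem_Mset_swap_iff {m : ℕ} {σ : Equiv.Perm (Fin (m + 2))} {j : Fin (m + 2)}
    (hj : 1 < σ j) :
    j ∈ Mset (Equiv.swap 0 1 * σ) ↔ j ∈ Mset σ := by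
  have hτ : ∀ x, (Equiv.swap (0 : Fin (m+2)) 1 * σ) x = Equiv.swap 0 1 (σ x) :=
    fun x => Equiv.Perm.mul_apply _ _ _
  have hjj : (Equiv.swap (0 : Fin (m+2)) 1 * σ) j = σ j := by
    rw [hτ]
    exact Equiv.swap_apply_of_ne_of_ne (by rintro h; rw [h] at hj; exact absurd hj (by simp [Fin.lt_def])) (by rintro h; rw [h] at hj; exact absurd hj (lt_irrefl _))
  rw [mem_Mset, mem_Mset]
  constructor
  · rintro ⟨⟨i, hi, hvi⟩, ⟨k, hk, hvk⟩⟩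
    rw [hjj, hτ] at hvi; rw [hjj, hτ] at hvk
    exact ⟨⟨i, hi, (lt_swap01_iff hj).1 hvi⟩, ⟨k, hk, (swap01_lt_iff hj).1 hvk⟩⟩
  · rintro ⟨⟨i, hi, hvi⟩, ⟨k, hk, hvk⟩⟩
    refine ⟨⟨i, hi, ?_⟩, ⟨k, hk, ?_⟩⟩
    · rw [hjj, hτ]; exact (lt_swap01_iff hj).2 hvi
    · rw [hjj, hτ]; exact (swap01_lt_iff hj).2 hvk

/-- The key structural lemma in the cancelling case. -/
lemma Mset_swap_of_big {m : ℕ} (σ : Equiv.Perm (Fin (m + 2))) (h : 1 < σ 0) :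
    Mset (Equiv.swap 0 1 * σ) =
      if σ.symm 0 < σ.symm 1 then insert (σ.symm 0) (Mset σ)
      else (Mset σ).erase (σ.symm 1) := by
  set τ := Equiv.swap (0 : Fin (m+2)) 1 * σ with hτdef
  set p := σ.symm 0 with hp
  set q := σ.symm 1 with hq
  have hσp : σ p = 0 := σ.apply_symm_apply 0
  have hσq : σ q = 1 := σ.apply_symm_apply 1
  have h01 : (0 : Fin (m+2)) ≠ 1 := by simp [Fin.ext_iff, Fin.val_one]
  have hpq : p ≠ q := fun h' => h01 (by rw [← hσp, ← hσq, h'])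
  have hσ0ne0 : σ 0 ≠ 0 := fun h' => by rw [h'] at h; exact absurd h (by simp [Fin.lt_def])
  have hσ0ne1 : σ 0 ≠ 1 := fun h' => by rw [h'] at h; exact absurd h (lt_irrefl _)
  have hpne0 : p ≠ 0 := fun h' => hσ0ne0 (h' ▸ hσp)
  have hqne0 : q ≠ 0 := fun h' => hσ0ne1 (h' ▸ hσq)
  have hτ : ∀ x, τ x = Equiv.swap 0 1 (σ x) := fun x => Equiv.Perm.mul_apply _ _ _
  have hτp : τ p = 1 := by rw [hτ, hσp, Equiv.swap_apply_left]
  have hτq : τ q = 0 := by rw [hτ, hσq, Equiv.swap_apply_right]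
  have hτ0 : τ 0 = σ 0 := by
    rw [hτ]; exact Equiv.swap_apply_of_ne_of_ne hσ0ne0 hσ0ne1
  -- p is not a midpoint of σ, q is not a midpoint of τ
  have hpM : p ∉ Mset σ := by
    rw [mem_Mset]; rintro ⟨-, ⟨k, -, hvk⟩⟩
    rw [hσp] at hvk; exact absurd hvk (by simp [Fin.lt_def])
  have hqM : q ∉ Mset τ := by
    rw [mem_Mset]; rintro ⟨-, ⟨k, -, hvk⟩⟩
    rw [hτq] at hvk; exact absurd hvk (by simp [Fin.lt_def])
  -- q ∈ Mset σ ↔ q < p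
  have hqmem : q ∈ Mset σ ↔ q < p := by
    rw [mem_Mset]
    constructor
    · rintro ⟨-, ⟨k, hk, hvk⟩⟩
      rw [hσq] at hvk
      have : σ k = 0 := lt_one_iff_eq_zero.1 hvk
      have : k = p := by rw [hp, ← this, Equiv.symm_apply_apply]
      rwa [← this]
    · intro hqp
      refine ⟨⟨0, Fin.pos_of_ne_zero hqne0, by rw [hσq]; exact h⟩,
              ⟨p, hqp, by rw [hσp, hσq]; exact lt_one_iff_eq_zero.2 rfl⟩⟩
  -- p ∈ Mset τ ↔ p < q
  have hpmem : p ∈ Mset τ ↔ p < q := by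
    rw [mem_Mset]
    constructor
    · rintro ⟨-, ⟨k, hk, hvk⟩⟩
      rw [hτp] at hvk
      have h0 : τ k = 0 := lt_one_iff_eq_zero.1 hvk
      have : k = q := by
        have := τ.injective (h0.trans hτq.symm)
        exact this
      rwa [← this]
    · intro hpq'
      refine ⟨⟨0, Fin.pos_of_ne_zero hpne0, by rw [hτp, hτ0]; exact h⟩,
              ⟨q, hpq', by rw [hτp, hτq]; exact lt_one_iff_eq_zero.2 rfl⟩⟩
  ext j
  rcases eq_or_ne j p with rfl | hjp
  · split_ifs with hc
    · simp only [mem_insert, true_or, iff_true]; exact hpmem.2 hc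
    · simp only [mem_erase]
      constructor
      · intro hmem; exact absurd (hpmem.1 hmem) hc
      · rintro ⟨-, hmem⟩; exact absurd hmem hpM
  rcases eq_or_ne j q with rfl | hjq
  · split_ifs with hc
    · simp only [mem_insert, hpq.symm, false_or]
      constructor
      · intro hmem; exact absurd hmem hqM
      · intro hmem; exact absurd (hqmem.1 hmem) (asymm hc)
    · simp only [mem_erase, ne_eq, not_true_eq_false, false_and, iff_false]
      exact hqM
  · have hσj0 : σ j ≠ 0 := fun h' => hjp (by rw [hp, ← h', Equiv.symm_apply_apply])
    have hσj1 : σ j ≠ 1 := fun h' => hjq (by rw [hq, ← h', Equiv.symm_apply_apply])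
    have hbig : 1 < σ j := one_lt_of_ne hσj0 hσj1
    rw [mem_Mset_swap_iff hbig]
    split_ifs with hc
    · simp [hjp]
    · simp [hjq]

/-- In the cancelling case the sign flips. -/
lemma sign_flip {m : ℕ} (σ : Equiv.Perm (Fin (m + 2))) (h : 1 < σ 0) :
    ((-1 : ℤ)) ^ (Mset (Equiv.swap 0 1 * σ)).card = -((-1) ^ (Mset σ).card) := by
  rw [Mset_swap_of_big σ h]
  have h01 : (0 : Fin (m+2)) ≠ 1 := by simp [Fin.ext_iff, Fin.val_one]
  have hpq : σ.symm 0 ≠ σ.symm 1 := fun h' => h01 (σ.symm.injective h')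
  have hσp : σ (σ.symm 0) = 0 := σ.apply_symm_apply 0
  have hσq : σ (σ.symm 1) = 1 := σ.apply_symm_apply 1
  have hpM : σ.symm 0 ∉ Mset σ := by
    rw [mem_Mset]; rintro ⟨-, ⟨k, -, hvk⟩⟩
    rw [hσp] at hvk; exact absurd hvk (by simp [Fin.lt_def])
  split_ifs with hc
  · rw [card_insert_of_notMem hpM, pow_succ]; ring
  · have hqp : σ.symm 1 < σ.symm 0 := (hpq.symm).lt_of_le (not_lt.1 hc)
    have hqM : σ.symm 1 ∈ Mset σ := by
      rw [mem_Mset]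
      have hqne0 : σ.symm 1 ≠ 0 := by
        intro h'
        have : σ 0 = 1 := by rw [← h', hσq]
        rw [this] at h; exact absurd h (lt_irrefl _)
      refine ⟨⟨0, Fin.pos_of_ne_zero hqne0, by rw [hσq]; exact h⟩,
              ⟨σ.symm 0, hqp, by rw [hσp, hσq]; exact lt_one_iff_eq_zero.2 rfl⟩⟩
    rw [card_erase_of_mem hqM]
    have hcard : 0 < (Mset σ).card := card_pos.2 ⟨_, hqM⟩
    have : (Mset σ).card = ((Mset σ).card - 1) + 1 := (Nat.succ_pred_eq_of_pos hcard).symm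
    rw [this, pow_succ]
    simp [pow_succ]

/-- In the non-cancelling case the set of midpoints is preserved. -/
lemma Mset_swap_of_small {m : ℕ} (σ : Equiv.Perm (Fin (m + 2)))
    (h : σ 0 = 0 ∨ σ 0 = 1) : Mset (Equiv.swap 0 1 * σ) = Mset σ := by
  set τ := Equiv.swap (0 : Fin (m+2)) 1 * σ with hτdef
  have hτ : ∀ x, τ x = Equiv.swap 0 1 (σ x) := fun x => Equiv.Perm.mul_apply _ _ _
  have h01 : (0 : Fin (m+2)) ≠ 1 := by simp [Fin.ext_iff, Fin.val_one]
  ext j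
  rcases eq_or_ne j 0 with rfl | hj0
  · constructor <;> (intro hmem; exfalso) <;>
      (rw [mem_Mset] at hmem; obtain ⟨⟨i, hi, -⟩, -⟩ := hmem;
        exact absurd hi (by simp [Fin.lt_def]))
  rcases h with h0 | h0
  · -- σ 0 = 0
    rcases eq_or_ne j (σ.symm 1) with rfl | hjq
    · have hσq : σ (σ.symm 1) = 1 := σ.apply_symm_apply 1
      have hτq : τ (σ.symm 1) = 0 := by rw [hτ, hσq, Equiv.swap_apply_right]
      constructor <;> (intro hmem; exfalso; rw [mem_Mset] at hmem)
      · obtain ⟨-, ⟨k, -, hvk⟩⟩ := hmem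
        rw [hτq] at hvk; exact absurd hvk (by simp [Fin.lt_def])
      · obtain ⟨-, ⟨k, hk, hvk⟩⟩ := hmem
        rw [hσq] at hvk
        have hk0 : σ k = 0 := lt_one_iff_eq_zero.1 hvk
        have : k = 0 := σ.injective (hk0.trans h0.symm)
        rw [this] at hk
        exact absurd hk (by simp [Fin.lt_def])
    · have hσj0 : σ j ≠ 0 := fun h' => hj0 (σ.injective (h'.trans h0.symm))
      have hσj1 : σ j ≠ 1 := fun h' => hjq (by rw [← h', Equiv.symm_apply_apply])
      exact mem_Mset_swap_iff (one_lt_of_ne hσj0 hσj1)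
  · -- σ 0 = 1
    rcases eq_or_ne j (σ.symm 0) with rfl | hjp
    · have hσp : σ (σ.symm 0) = 0 := σ.apply_symm_apply 0
      have hτp : τ (σ.symm 0) = 1 := by rw [hτ, hσp, Equiv.swap_apply_left]
      constructor <;> (intro hmem; exfalso; rw [mem_Mset] at hmem)
      · obtain ⟨-, ⟨k, hk, hvk⟩⟩ := hmem
        rw [hτp] at hvk
        have hk0 : τ k = 0 := lt_one_iff_eq_zero.1 hvk
        have hτ0 : τ 0 = 0 := by rw [hτ, h0, Equiv.swap_apply_right]
        have : k = 0 := τ.injective (hk0.trans hτ0.symm)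
        rw [this] at hk
        exact absurd hk (by simp [Fin.lt_def])
      · obtain ⟨-, ⟨k, -, hvk⟩⟩ := hmem
        rw [hσp] at hvk; exact absurd hvk (by simp [Fin.lt_def])
    · have hσj0 : σ j ≠ 0 := fun h' => hjp (by rw [← h', Equiv.symm_apply_apply])
      have hσj1 : σ j ≠ 1 := fun h' => hj0 (σ.injective (h'.trans h0.symm))
      exact mem_Mset_swap_iff (one_lt_of_ne hσj0 hσj1)

/-- The recursion: permutations fixing `0` correspond to permutations of `Fin m`. -/
lemma Mset_lift {m : ℕ} (e : Equiv.Perm (Fin m)) :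
    Mset (Equiv.Perm.decomposeFin.symm (0, e)) =
      (Mset e).map ⟨Fin.succ, Fin.succ_injective m⟩ := by
  set σ := Equiv.Perm.decomposeFin.symm ((0 : Fin (m+1)), e) with hσ
  have hs0 : σ 0 = 0 := Equiv.Perm.decomposeFin_symm_apply_zero 0 e
  have hss : ∀ x : Fin m, σ x.succ = (e x).succ := by
    intro x
    rw [hσ, Equiv.Perm.decomposeFin_symm_apply_succ, Equiv.swap_self]
    rfl
  ext j
  refine Fin.cases ?_ ?_ j
  · simp only [mem_map, Function.Embedding.coeFn_mk]
    constructor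
    · intro hmem
      rw [mem_Mset] at hmem
      obtain ⟨⟨i, hi, -⟩, -⟩ := hmem
      exact absurd hi (by simp [Fin.lt_def])
    · rintro ⟨a, -, ha⟩
      exact absurd ha (Fin.succ_ne_zero a)
  · intro j'
    simp only [mem_map, Function.Embedding.coeFn_mk]
    constructor
    · intro hmem
      rw [mem_Mset] at hmem
      obtain ⟨⟨i, hi, hvi⟩, ⟨k, hk, hvk⟩⟩ := hmem
      refine ⟨j', ?_, rfl⟩
      rw [mem_Mset]
      constructor
      · refine Fin.cases ?_ ?_ i hi hvi
        · intro _ hvi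
          rw [hs0, hss] at hvi
          exact absurd hvi (by simp [Fin.lt_def])
        · intro i' hi' hvi'
          rw [hss, hss] at hvi'
          exact ⟨i', Fin.succ_lt_succ_iff.1 hi', Fin.succ_lt_succ_iff.1 hvi'⟩
      · refine Fin.cases ?_ ?_ k hk hvk
        · intro hk _
          exact absurd hk (by simp [Fin.lt_def])
        · intro k' hk' hvk'
          rw [hss, hss] at hvk'
          exact ⟨k', Fin.succ_lt_succ_iff.1 hk', Fin.succ_lt_succ_iff.1 hvk'⟩
    · rintro ⟨a, hmem, ha⟩
      have : a = j' := Fin.succ_injective m ha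
      subst this
      rw [mem_Mset] at hmem ⊢
      obtain ⟨⟨i, hi, hvi⟩, ⟨k, hk, hvk⟩⟩ := hmem
      refine ⟨⟨i.succ, Fin.succ_lt_succ_iff.2 hi, ?_⟩,
              ⟨k.succ, Fin.succ_lt_succ_iff.2 hk, ?_⟩⟩
      · rw [hss, hss]; exact Fin.succ_lt_succ_iff.2 hvi
      · rw [hss, hss]; exact Fin.succ_lt_succ_iff.2 hvk

lemma sum_fix_zero {m : ℕ} :
    ∑ σ ∈ (univ : Finset (Equiv.Perm (Fin (m+1)))).filter (fun σ => σ 0 = 0),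
        ((-1 : ℤ)) ^ (Mset σ).card
      = ∑ e : Equiv.Perm (Fin m), ((-1 : ℤ)) ^ (Mset e).card := by
  have key : ∀ σ : Equiv.Perm (Fin (m+1)), σ 0 = 0 →
      Equiv.Perm.decomposeFin.symm (0, (Equiv.Perm.decomposeFin σ).2) = σ := by
    intro σ hσ0
    have h1 : (Equiv.Perm.decomposeFin σ).1 = σ 0 := by
      conv_rhs => rw [← Equiv.symm_apply_apply Equiv.Perm.decomposeFin σ]
      rw [← Equiv.Perm.decomposeFin_symm_apply_zero (Equiv.Perm.decomposeFin σ).1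
        (Equiv.Perm.decomposeFin σ).2]
    have h10 : (Equiv.Perm.decomposeFin σ).1 = 0 := h1.trans hσ0
    have hpe : ((0 : Fin (m+1)), (Equiv.Perm.decomposeFin σ).2)
        = Equiv.Perm.decomposeFin σ := Prod.ext h10.symm rfl
    rw [hpe, Equiv.symm_apply_apply]
  refine Finset.sum_nbij' (fun σ => (Equiv.Perm.decomposeFin σ).2)
    (fun e => Equiv.Perm.decomposeFin.symm (0, e)) ?_ ?_ ?_ ?_ ?_
  · intro x hx; exact mem_univ _
  · intro e he
    rw [mem_filter]
    exact ⟨mem_univ _, Equiv.Perm.decomposeFin_symm_apply_zero 0 e⟩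
  · intro σ hσ
    rw [mem_filter] at hσ
    exact key σ hσ.2
  · intro e he; simp
  · intro σ hσ
    rw [mem_filter] at hσ
    conv_lhs => rw [← key σ hσ.2]
    rw [Mset_lift, card_map]

lemma mset_sum_rec {m : ℕ} :
    ∑ σ : Equiv.Perm (Fin (m + 2)), ((-1 : ℤ)) ^ (Mset σ).card
      = 2 * ∑ e : Equiv.Perm (Fin (m + 1)), ((-1 : ℤ)) ^ (Mset e).card := by
  classical
  have hsplit :
      ∑ σ : Equiv.Perm (Fin (m + 2)), ((-1 : ℤ)) ^ (Mset σ).card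
        = (∑ σ ∈ (univ : Finset (Equiv.Perm (Fin (m+2)))).filter
            (fun σ => σ 0 = 0 ∨ σ 0 = 1), ((-1 : ℤ)) ^ (Mset σ).card)
          + ∑ σ ∈ (univ : Finset (Equiv.Perm (Fin (m+2)))).filter
            (fun σ => ¬(σ 0 = 0 ∨ σ 0 = 1)), ((-1 : ℤ)) ^ (Mset σ).card :=
    (Finset.sum_filter_add_sum_filter_not _ _ _).symm
  have hzero :
      ∑ σ ∈ (univ : Finset (Equiv.Perm (Fin (m+2)))).filter
          (fun σ => ¬(σ 0 = 0 ∨ σ 0 = 1)), ((-1 : ℤ)) ^ (Mset σ).card = 0 := by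
    refine Finset.sum_involution (fun σ _ => Equiv.swap 0 1 * σ) ?_ ?_ ?_ ?_
    · intro σ hσ
      rw [mem_filter] at hσ
      push_neg at hσ
      rw [sign_flip σ (one_lt_of_ne hσ.2.1 hσ.2.2)]
      ring
    · intro σ hσ hne hgσ
      have hg : Equiv.swap 0 1 * σ = σ := hgσ
      rw [mem_filter] at hσ
      push_neg at hσ
      have := sign_flip σ (one_lt_of_ne hσ.2.1 hσ.2.2)
      rw [hg] at this
      have h2 : (2 : ℤ) * (-1) ^ (Mset σ).card = 0 := by linarith
      have := mul_eq_zero.1 h2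
      rcases this with h | h
      · norm_num at h
      · exact hne (by rw [h])
    · intro σ hσ
      rw [mem_filter] at hσ ⊢
      push_neg at hσ
      have h1lt : 1 < σ 0 := one_lt_of_ne hσ.2.1 hσ.2.2
      have hval : (Equiv.swap (0 : Fin (m+2)) 1 * σ) 0 = σ 0 := by
        rw [Equiv.Perm.mul_apply]
        exact Equiv.swap_apply_of_ne_of_ne hσ.2.1 hσ.2.2
      refine ⟨mem_univ _, ?_⟩
      push_neg
      rw [hval]
      exact ⟨hσ.2.1, hσ.2.2⟩
    · intro σ hσ
      show Equiv.swap 0 1 * (Equiv.swap 0 1 * σ) = σ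
      rw [← mul_assoc, Equiv.swap_mul_self, one_mul]
  have hpair :
      ∑ σ ∈ (univ : Finset (Equiv.Perm (Fin (m+2)))).filter
          (fun σ => σ 0 = 0 ∨ σ 0 = 1), ((-1 : ℤ)) ^ (Mset σ).card
        = 2 * ∑ σ ∈ (univ : Finset (Equiv.Perm (Fin (m+2)))).filter
            (fun σ => σ 0 = 0), ((-1 : ℤ)) ^ (Mset σ).card := by
    have h01 : (0 : Fin (m+2)) ≠ 1 := by simp [Fin.ext_iff, Fin.val_one]
    have hfe : (univ : Finset (Equiv.Perm (Fin (m+2)))).filter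
        (fun σ => σ 0 = 0 ∨ σ 0 = 1)
        = ((univ : Finset (Equiv.Perm (Fin (m+2)))).filter (fun σ => σ 0 = 0))
          ∪ ((univ : Finset (Equiv.Perm (Fin (m+2)))).filter (fun σ => σ 0 = 1)) := by
      rw [← filter_or]
    have hdisj : Disjoint
        ((univ : Finset (Equiv.Perm (Fin (m+2)))).filter (fun σ => σ 0 = 0))
        ((univ : Finset (Equiv.Perm (Fin (m+2)))).filter (fun σ => σ 0 = 1)) := by
      rw [disjoint_filter]
      intro σ _ h0 h1
      exact h01 (h0.symm.trans h1)
    rw [hfe, sum_union hdisj]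
    have hswap :
        ∑ σ ∈ (univ : Finset (Equiv.Perm (Fin (m+2)))).filter (fun σ => σ 0 = 1),
            ((-1 : ℤ)) ^ (Mset σ).card
          = ∑ σ ∈ (univ : Finset (Equiv.Perm (Fin (m+2)))).filter (fun σ => σ 0 = 0),
            ((-1 : ℤ)) ^ (Mset σ).card := by
      refine Finset.sum_nbij' (fun σ => Equiv.swap 0 1 * σ) (fun σ => Equiv.swap 0 1 * σ)
        ?_ ?_ ?_ ?_ ?_
      all_goals intro σ hσ
      · rw [mem_filter] at hσ ⊢
        refine ⟨mem_univ _, ?_⟩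
        rw [Equiv.Perm.mul_apply, hσ.2, Equiv.swap_apply_right]
      · rw [mem_filter] at hσ ⊢
        refine ⟨mem_univ _, ?_⟩
        rw [Equiv.Perm.mul_apply, hσ.2, Equiv.swap_apply_left]
      · show Equiv.swap 0 1 * (Equiv.swap 0 1 * σ) = σ
        rw [← mul_assoc, Equiv.swap_mul_self, one_mul]
      · show Equiv.swap 0 1 * (Equiv.swap 0 1 * σ) = σ
        rw [← mul_assoc, Equiv.swap_mul_self, one_mul]
      · rw [mem_filter] at hσ
        rw [Mset_swap_of_small σ (Or.inr hσ.2)]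
    rw [hswap, sum_fix_zero]
    ring
  rw [hsplit, hzero, hpair, sum_fix_zero]
  ring

lemma mset_sum_pow (k : ℕ) :
    ∑ σ : Equiv.Perm (Fin (k + 1)), ((-1 : ℤ)) ^ (Mset σ).card = 2 ^ k := by
  induction k with
  | zero =>
    have hM : ∀ σ : Equiv.Perm (Fin 1), Mset σ = ∅ := by
      intro σ
      ext j
      rw [mem_Mset]
      simp only [notMem_empty, iff_false]
      rintro ⟨⟨i, hi, -⟩, -⟩
      exact absurd hi (by omega)
    simp only [hM, card_empty, pow_zero]
    simp
  | succ k ih =>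
    rw [mset_sum_rec, ih]
    ring

/-- The generating function of the number of midpoints of decreasing
subsequences of length 3 on `S_n` evaluated at `q = -1` equals `2^(n-1)`. -/
theorem midpoints_decreasing_q_eq_neg_one (n : ℕ) (hn : 0 < n) :
    ∑ σ : Equiv.Perm (Fin n),
      (-1 : ℤ) ^ (univ.filter (fun j : Fin n =>
        ∃ i k : Fin n, i < j ∧ j < k ∧ σ j < σ i ∧ σ k < σ j)).card
      = 2 ^ (n - 1) := by
  obtain ⟨k, rfl⟩ := Nat.exists_eq_add_of_lt hn
  rw [zero_add]
  have := mset_sum_pow k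
  simpa [Mset] using this
end

section
/- For every positive integer n and every nonnegative integer m, the number of permutations of [n] having exactly m midpoints of decreasing subsequences of length 3 equals the number of permutations of [n] having exactly m midpoints of increasing subsequences of length 3; that is, the two statistics are equidistributed on S_n. -/
open Finset

/-- The number of midpoints of decreasing subsequences of length 3 is
equidistributed on `S_n` with the number of midpoints of increasing
subsequences of length 3. -/
theorem midpoints_equidistributed (n : ℕ) (hn : 0 < n) (m : ℕ) :
    (univ.filter (fun σ : Equiv.Perm (Fin n) =>
      (univ.filter (fun j : Fin n =>
        ∃ i k : Fin n, i < j ∧ j < k ∧ σ j < σ i ∧ σ k < σ j)).card = m)).card =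
    (univ.filter (fun σ : Equiv.Perm (Fin n) =>
      (univ.filter (fun j : Fin n =>
        ∃ i k : Fin n, i < j ∧ j < k ∧ σ i < σ j ∧ σ j < σ k)).card = m)).card := by
  refine Finset.card_bij' (fun σ _ => Fin.revPerm * σ) (fun σ _ => Fin.revPerm * σ) ?_ ?_ (fun σ _ => by ext x; simp) (fun σ _ => by ext x; simp)
  · intro σ hσ
    simp only [mem_filter, mem_univ, true_and] at hσ ⊢
    rw [← hσ]
    congr 1
    apply Finset.filter_congr
    intro j _
    constructor
    · rintro ⟨i, k, h1, h2, h3, h4⟩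
      exact ⟨i, k, h1, h2, by simpa [Fin.rev_lt_rev] using h3,
        by simpa [Fin.rev_lt_rev] using h4⟩
    · rintro ⟨i, k, h1, h2, h3, h4⟩
      exact ⟨i, k, h1, h2, by simpa [Fin.rev_lt_rev] using h3,
        by simpa [Fin.rev_lt_rev] using h4⟩
  · intro σ hσ
    simp only [mem_filter, mem_univ, true_and] at hσ ⊢
    rw [← hσ]
    congr 1
    apply Finset.filter_congr
    intro j _
    constructor
    · rintro ⟨i, k, h1, h2, h3, h4⟩
      exact ⟨i, k, h1, h2, by simpa [Fin.rev_lt_rev] using h3,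
        by simpa [Fin.rev_lt_rev] using h4⟩
    · rintro ⟨i, k, h1, h2, h3, h4⟩
      exact ⟨i, k, h1, h2, by simpa [Fin.rev_lt_rev] using h3,
        by simpa [Fin.rev_lt_rev] using h4⟩
end

section
/- For every even integer n ≥ 2, the sum over all permutations σ of [n] of (-1) raised to the number of indices of σ that are either left-to-right maxima or right-to-left minima equals 2^(n-1). (Hence this statistic exhibits the cyclic sieving phenomenon for involutions with 2^(n-1) fixed points when n is even.) -/
/-!
Position 0 is always a left-to-right maximum and the position of the value 0 is always a
right-to-left minimum. Sort the permutations of `Fin (n + 2)` by their first value `p`. If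
`p ≤ 1`, deleting the first entry and standardising leaves every other position's status
unchanged, so the fibre contributes `-S(n + 1)`, where `S(n)` is the signed sum over `Fin n`.
If `p > 1`, exchanging the values 0 and 1 is a sign-reversing involution of the fibre. Hence
`S(n + 2) = -2 S(n + 1)` and `S(1) = -1`, so `S(n + 1) = -(-2)^n`, which is `2^n` for odd `n`.
-/

open Finset

theorem Finset.pow_card_eq_prod_ite {ι M : Type*} [Fintype ι] [DecidableEq ι] [CommMonoid M]
    (a : M) (s : Finset ι) : a ^ #s = ∏ i, if i ∈ s then a else 1 := by
  rw [Fintype.prod_ite_mem, prod_const]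

theorem Fin.one_lt_iff_ne_zero_and_ne_one {n : ℕ} {x : Fin (n + 2)} :
    1 < x ↔ x ≠ 0 ∧ x ≠ 1 := by
  simp only [Fin.lt_def, ne_eq, Fin.ext_iff, Fin.val_one, Fin.val_zero]
  omega

namespace Equiv

variable {α : Type*} [LinearOrder α] {x y c : α}

theorem swap_apply_lt_iff (hx : x < c) (hy : y < c) (a : α) : swap x y a < c ↔ a < c := by
  rcases eq_or_ne a x with rfl | hax
  · simp [hx, hy]
  rcases eq_or_ne a y with rfl | hay
  · simp [hx, hy]
  rw [swap_apply_of_ne_of_ne hax hay]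

theorem lt_swap_apply_iff (hx : x < c) (hy : y < c) (a : α) : c < swap x y a ↔ c < a := by
  rcases eq_or_ne a x with rfl | hax
  · simp [hx.not_gt, hy.not_gt]
  rcases eq_or_ne a y with rfl | hay
  · simp [hx.not_gt, hy.not_gt]
  rw [swap_apply_of_ne_of_ne hax hay]

end Equiv

namespace Equiv.Perm

variable {n : ℕ}

def IsLRMax (σ : Perm (Fin n)) (i : Fin n) : Prop := ∀ j, j < i → σ j < σ i

def IsRLMin (σ : Perm (Fin n)) (i : Fin n) : Prop := ∀ j, i < j → σ i < σ j

instance (σ : Perm (Fin n)) : DecidablePred σ.IsLRMax := fun i =>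
  inferInstanceAs (Decidable (∀ j, j < i → σ j < σ i))

instance (σ : Perm (Fin n)) : DecidablePred σ.IsRLMin := fun i =>
  inferInstanceAs (Decidable (∀ j, i < j → σ i < σ j))

def lrMaxOrRLMin (σ : Perm (Fin n)) : Finset (Fin n) := {i | σ.IsLRMax i ∨ σ.IsRLMin i}

@[simp]
theorem mem_lrMaxOrRLMin {σ : Perm (Fin n)} {i : Fin n} :
    i ∈ σ.lrMaxOrRLMin ↔ σ.IsLRMax i ∨ σ.IsRLMin i := by
  simp [lrMaxOrRLMin]

theorem isLRMax_zero (σ : Perm (Fin (n + 1))) : σ.IsLRMax 0 :=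
  fun j hj => absurd hj (Fin.not_lt_zero j)

theorem isRLMin_of_apply_eq_zero {σ : Perm (Fin (n + 1))} {i : Fin (n + 1)} (hi : σ i = 0) :
    σ.IsRLMin i := fun j hij => by
  rw [hi, Fin.pos_iff_ne_zero, ← hi, σ.injective.ne_iff]
  exact hij.ne'

section SwapZeroOne

variable {σ : Perm (Fin (n + 2))}

theorem mem_lrMaxOrRLMin_swap_zero_one_mul_iff {k : Fin (n + 2)} (hk : 1 < σ k) :
    k ∈ (swap 0 1 * σ).lrMaxOrRLMin ↔ k ∈ σ.lrMaxOrRLMin := by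
  have hk0 : 0 < σ k := Fin.pos_of_ne_zero (Fin.one_lt_iff_ne_zero_and_ne_one.1 hk).1
  simp only [mem_lrMaxOrRLMin, IsLRMax, IsRLMin, mul_apply,
    swap_apply_of_ne_of_ne hk0.ne' hk.ne', swap_apply_lt_iff hk0 hk, lt_swap_apply_iff hk0 hk]

theorem mem_lrMaxOrRLMin_iff_of_apply_eq_one (h : 1 < σ 0) {i j : Fin (n + 2)} (hi : σ i = 0)
    (hj : σ j = 1) : j ∈ σ.lrMaxOrRLMin ↔ i < j := by
  have hj0 : 0 < j := Fin.pos_of_ne_zero fun hj0 => by simp [← hj0, hj] at h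
  have not_lrMax : ¬σ.IsLRMax j := fun hmax => (hmax 0 hj0).not_gt (hj ▸ h)
  rw [mem_lrMaxOrRLMin, or_iff_right not_lrMax]
  constructor
  · intro hmin
    by_contra! hji
    have := hmin i (lt_of_le_of_ne hji fun hji => by simp [hji, hi] at hj)
    simp [hi, hj] at this
  · intro hij k hjk
    rw [hj, Fin.one_lt_iff_ne_zero_and_ne_one, ← hi, ← hj, σ.injective.ne_iff, σ.injective.ne_iff]
    exact ⟨(hij.trans hjk).ne', hjk.ne'⟩

theorem neg_one_pow_card_lrMaxOrRLMin_swap_zero_one_mul (h : 1 < σ 0) :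
    (-1 : ℤ) ^ #(swap 0 1 * σ).lrMaxOrRLMin = -(-1) ^ #σ.lrMaxOrRLMin := by
  set a := σ⁻¹ 0
  set b := σ⁻¹ 1
  have hσa : σ a = 0 := σ.apply_symm_apply 0
  have hσb : σ b = 1 := σ.apply_symm_apply 1
  have hτa : (swap 0 1 * σ : Perm (Fin (n + 2))) a = 1 := by simp [hσa]
  have hτb : (swap 0 1 * σ : Perm (Fin (n + 2))) b = 0 := by simp [hσb]
  have hτ0 : 1 < (swap 0 1 * σ : Perm (Fin (n + 2))) 0 := by
    obtain ⟨h0, h1⟩ := Fin.one_lt_iff_ne_zero_and_ne_one.1 h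
    rwa [mul_apply, swap_apply_of_ne_of_ne h0 h1]
  have hab : a ≠ b := fun hab => by simp [hab, hσb] at hσa
  -- Off `a` and `b` the two sets agree; at `a` and `b` exactly one of them misses a point.
  have hprod : (-1 : ℤ) ^ #(swap 0 1 * σ).lrMaxOrRLMin * (-1) ^ #σ.lrMaxOrRLMin = -1 := by
    rw [pow_card_eq_prod_ite, pow_card_eq_prod_ite, ← prod_mul_distrib,
      Fintype.prod_eq_mul a b hab]
    · simp only [mem_lrMaxOrRLMin_iff_of_apply_eq_one hτ0 hτb hτa,
        mem_lrMaxOrRLMin_iff_of_apply_eq_one h hσa hσb,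
        mem_lrMaxOrRLMin.2 (Or.inr (isRLMin_of_apply_eq_zero hσa)),
        mem_lrMaxOrRLMin.2 (Or.inr (isRLMin_of_apply_eq_zero hτb)), if_true]
      rcases hab.lt_or_gt with hlt | hlt <;> simp [hlt, hlt.not_gt]
    · rintro k ⟨hka, hkb⟩
      have hk : 1 < σ k := by
        rw [Fin.one_lt_iff_ne_zero_and_ne_one, ← hσa, ← hσb, σ.injective.ne_iff,
          σ.injective.ne_iff]
        exact ⟨hka, hkb⟩
      simp only [mem_lrMaxOrRLMin_swap_zero_one_mul_iff hk]
      split_ifs <;> norm_num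
  have hsq : (-1 : ℤ) ^ #σ.lrMaxOrRLMin * (-1) ^ #σ.lrMaxOrRLMin = 1 := by
    rw [← pow_add, ← two_mul, pow_mul, neg_one_sq, one_pow]
  linear_combination (-1 : ℤ) ^ #σ.lrMaxOrRLMin * hprod -
    (-1 : ℤ) ^ #(swap 0 1 * σ).lrMaxOrRLMin * hsq

end SwapZeroOne

section RemoveFirst

variable {σ : Perm (Fin (n + 2))} {e : Perm (Fin (n + 1))}

theorem isRLMin_succ_iff (he : ∀ i j, σ i.succ < σ j.succ ↔ e i < e j) {k : Fin (n + 1)} :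
    σ.IsRLMin k.succ ↔ e.IsRLMin k := by
  simp only [IsRLMin, Fin.forall_fin_succ, (Fin.succ_pos k).not_gt, Fin.succ_lt_succ_iff, he,
    false_imp_iff, true_and]

theorem isLRMax_succ_iff (he : ∀ i j, σ i.succ < σ j.succ ↔ e i < e j) {k : Fin (n + 1)} :
    σ.IsLRMax k.succ ↔ σ 0 < σ k.succ ∧ e.IsLRMax k := by
  simp only [IsLRMax, Fin.forall_fin_succ, Fin.succ_pos k, Fin.succ_lt_succ_iff, he,
    true_imp_iff]

theorem card_lrMaxOrRLMin_eq_succ (he : ∀ i j, σ i.succ < σ j.succ ↔ e i < e j)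
    (h0 : σ 0 ≤ 1) : #σ.lrMaxOrRLMin = #e.lrMaxOrRLMin + 1 := by
  have hmem : ∀ k, σ.IsLRMax k.succ ∨ σ.IsRLMin k.succ ↔ e.IsLRMax k ∨ e.IsRLMin k := by
    intro k
    -- A position that is not a right-to-left minimum does not carry the value 0.
    have hlt : ¬e.IsRLMin k → σ 0 < σ k.succ := fun hk => by
      have hk0 : σ k.succ ≠ 0 := fun hk0 =>
        hk ((isRLMin_succ_iff he).1 (isRLMin_of_apply_eq_zero hk0))
      have hk1 : σ k.succ ≠ σ 0 := σ.injective.ne (Fin.succ_ne_zero k)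
      simp only [Fin.lt_def, Fin.le_def, ne_eq, Fin.ext_iff, Fin.val_one, Fin.val_zero]
        at h0 hk0 hk1 ⊢
      omega
    rw [isLRMax_succ_iff he, isRLMin_succ_iff he]
    tauto
  rw [lrMaxOrRLMin, Fin.card_filter_univ_succ, if_pos (Or.inl (isLRMax_zero σ))]
  simp only [hmem]
  rfl

end RemoveFirst

theorem swap_zero_apply_succ {p : Fin (n + 2)} (hp : p ≤ 1) (i : Fin (n + 1)) :
    swap 0 p i.succ = p.succAbove i := by
  obtain rfl | rfl : p = 0 ∨ p = 1 := by
    simp only [Fin.le_def, Fin.ext_iff, Fin.val_one, Fin.val_zero] at hp ⊢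
    omega
  · simp
  · cases i using Fin.cases with
    | zero => simp
    | succ i =>
      rw [Fin.one_succAbove_succ, swap_apply_of_ne_of_ne (Fin.succ_ne_zero _)]
      rw [← Fin.succ_zero_eq_one, Ne, Fin.succ_inj]
      exact Fin.succ_ne_zero i

theorem card_lrMaxOrRLMin_decomposeFin_symm {p : Fin (n + 2)} (hp : p ≤ 1)
    (e : Perm (Fin (n + 1))) :
    #(decomposeFin.symm (p, e)).lrMaxOrRLMin = #e.lrMaxOrRLMin + 1 :=
  card_lrMaxOrRLMin_eq_succ (fun i j => by
    simp only [decomposeFin_symm_apply_succ, swap_zero_apply_succ hp,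
      (Fin.strictMono_succAbove p).lt_iff_lt]) (by simpa using hp)

theorem sum_filter_apply_zero_eq {M : Type*} [AddCommMonoid M] (p : Fin (n + 1))
    (f : Perm (Fin (n + 1)) → M) :
    ∑ σ with σ 0 = p, f σ = ∑ e : Perm (Fin n), f (decomposeFin.symm (p, e)) := by
  rw [sum_filter, ← decomposeFin.symm.sum_comp, Fintype.sum_prod_type]
  simp

theorem sum_filter_apply_zero_eq_neg {p : Fin (n + 2)} (hp : p ≤ 1) :
    ∑ σ : Perm (Fin (n + 2)) with σ 0 = p, (-1 : ℤ) ^ #σ.lrMaxOrRLMin =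
      -∑ e : Perm (Fin (n + 1)), (-1 : ℤ) ^ #e.lrMaxOrRLMin := by
  simp only [sum_filter_apply_zero_eq, card_lrMaxOrRLMin_decomposeFin_symm hp, pow_succ,
    mul_neg_one, sum_neg_distrib]

theorem sum_filter_apply_zero_eq_zero {p : Fin (n + 2)} (hp : 1 < p) :
    ∑ σ : Perm (Fin (n + 2)) with σ 0 = p, (-1 : ℤ) ^ #σ.lrMaxOrRLMin = 0 := by
  refine sum_involution (fun σ _ => swap 0 1 * σ) (fun σ hσ => ?_) (fun σ _ _ => ?_)
    (fun σ hσ => ?_) (fun σ _ => swap_mul_self_mul 0 1 σ)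
  · rw [neg_one_pow_card_lrMaxOrRLMin_swap_zero_one_mul ((mem_filter.1 hσ).2 ▸ hp),
      add_neg_cancel]
  · exact fun h => zero_ne_one (swap_mul_eq_iff.1 h)
  · obtain ⟨hp0, hp1⟩ := Fin.one_lt_iff_ne_zero_and_ne_one.1 hp
    simp only [mem_filter, mem_univ, true_and, mul_apply] at hσ ⊢
    rw [hσ, swap_apply_of_ne_of_ne hp0 hp1]

theorem sum_neg_one_pow_card_lrMaxOrRLMin_succ_succ (n : ℕ) :
    ∑ σ : Perm (Fin (n + 2)), (-1 : ℤ) ^ #σ.lrMaxOrRLMin =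
      -2 * ∑ σ : Perm (Fin (n + 1)), (-1 : ℤ) ^ #σ.lrMaxOrRLMin := by
  rw [← sum_fiberwise univ (fun σ : Perm (Fin (n + 2)) => σ 0),
    Fintype.sum_eq_add 0 1 zero_ne_one fun p hp =>
      sum_filter_apply_zero_eq_zero (Fin.one_lt_iff_ne_zero_and_ne_one.2 hp),
    sum_filter_apply_zero_eq_neg (Fin.zero_le _), sum_filter_apply_zero_eq_neg le_rfl]
  ring

theorem sum_neg_one_pow_card_lrMaxOrRLMin_fin_succ (n : ℕ) :
    ∑ σ : Perm (Fin (n + 1)), (-1 : ℤ) ^ #σ.lrMaxOrRLMin = -(-2) ^ n := by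
  induction n with
  | zero => simp [lrMaxOrRLMin, filter_singleton, isLRMax_zero]
  | succ n ih => rw [sum_neg_one_pow_card_lrMaxOrRLMin_succ_succ, ih]; ring

end Equiv.Perm

open Equiv.Perm in
/-- For even `n`, the generating function of the number of indices that are
left-to-right maxima or right-to-left minima, evaluated at `q = -1`, equals
`2^(n-1)`. -/
theorem lr_max_or_rl_min_q_eq_neg_one (n : ℕ) (hn : 2 ≤ n) (hpar : Even n) :
    ∑ σ : Equiv.Perm (Fin n),
      (-1 : ℤ) ^ (univ.filter (fun i : Fin n =>
        (∀ j : Fin n, j < i → σ j < σ i) ∨ (∀ j : Fin n, i < j → σ i < σ j))).card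
      = 2 ^ (n - 1) := by
  obtain ⟨m, rfl⟩ : ∃ m, n = m + 1 := ⟨n - 1, by omega⟩
  have hm : Odd m := by simpa [Nat.even_add_one] using hpar
  calc _ = ∑ σ : Equiv.Perm (Fin (m + 1)), (-1 : ℤ) ^ #σ.lrMaxOrRLMin := rfl
    _ = 2 ^ m := by rw [sum_neg_one_pow_card_lrMaxOrRLMin_fin_succ, hm.neg_pow, neg_neg]
end

section
/- For every positive integer n, the sum over all permutations σ of [n] of (-1) raised to the number of occurrences of the vincular pattern 32-1 in σ equals 2^(n-1). (This is the q = -1 evaluation of the generating function of the number of occurrences of 32-1, showing it exhibits the cyclic sieving phenomenon for involutions with 2^(n-1) fixed points.) -/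
/-!
Let `C r` (`nearlySorted n r`) be the set of permutations whose entries increase from position `r`
on, except that the entries at positions `r - 1` and `r` may come in either order, so `C 0 = {1}`
and `C (n - 1)` is everything. Right multiplication by the transposition `s` of the positions `r`
and `r + 1` is an involution of `C (r + 1)`; it permutes the occurrences whose descent lies left
of position `r`, and the only other possible occurrence is `(r - 1, r + 1)`. Pairing `σ` (with
`σ r < σ (r + 1)`) with `σ * s`, the pair cancels when `σ (r - 1) > σ (r + 1)` and contributes
`2 (-1) ^ occ σ` otherwise; the permutations of the second kind form exactly `C r`. So the signed
sum doubles from `C r` to `C (r + 1)`.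
-/

open Finset Equiv

theorem Finset.sum_eq_sum_filter_add_involution {α β : Type*} [AddCommMonoid β] {s : Finset α}
    {p : α → Prop} [DecidablePred p] (f : α → β) (g : α → α) (hg : ∀ x ∈ s, g x ∈ s)
    (hgg : ∀ x ∈ s, g (g x) = x) (hp : ∀ x ∈ s, p (g x) ↔ ¬ p x) :
    ∑ x ∈ s, f x = ∑ x ∈ s with p x, (f x + f (g x)) := by
  rw [sum_add_distrib, ← sum_filter_add_sum_filter_not s p f]
  congr 1
  refine sum_nbij' g g ?_ ?_ ?_ ?_ ?_
  all_goals
    intro x hx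
    simp only [mem_filter] at hx ⊢
    obtain ⟨hx, hpx⟩ := hx
  · exact ⟨hg x hx, (hp x hx).mpr hpx⟩
  · exact ⟨hg x hx, (hp x hx).not.mpr (not_not.mpr hpx)⟩
  · exact hgg x hx
  · exact hgg x hx
  · rw [hgg x hx]

namespace Vincular321

variable {n : ℕ}

def occurrences (σ : Perm (Fin n)) : Finset (Fin n × Fin n) :=
  univ.filter fun p => ∃ i1 : Fin n, (i1 : ℕ) = (p.1 : ℕ) + 1 ∧ i1 < p.2 ∧
    σ i1 < σ p.1 ∧ σ p.2 < σ i1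

lemma mem_occurrences {σ : Perm (Fin n)} {x : Fin n × Fin n} :
    x ∈ occurrences σ ↔ ∃ i1 : Fin n, (i1 : ℕ) = (x.1 : ℕ) + 1 ∧ i1 < x.2 ∧
      σ i1 < σ x.1 ∧ σ x.2 < σ i1 := by
  simp [occurrences]

def weight (σ : Perm (Fin n)) : ℤ := (-1) ^ (occurrences σ).card

def lowOccurrences (r : ℕ) (σ : Perm (Fin n)) : Finset (Fin n × Fin n) :=
  (occurrences σ).filter fun x => (x.1 : ℕ) + 1 < r

lemma mem_lowOccurrences_of_mul {r : ℕ} {σ τ : Perm (Fin n)}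
    (hτ : ∀ x : Fin n, (x : ℕ) < r → τ x = x) {x : Fin n × Fin n}
    (hx : x ∈ lowOccurrences r (σ * τ)) : (x.1, τ x.2) ∈ lowOccurrences r σ := by
  simp only [lowOccurrences, mem_filter, mem_occurrences, Perm.mul_apply] at hx ⊢
  obtain ⟨⟨i1, hi1, hlt, hdesc, hk⟩, hlow⟩ := hx
  have hτi1 : τ i1 = i1 := hτ i1 (by omega)
  rw [hτi1, hτ x.1 (by omega)] at hdesc
  rw [hτi1] at hk
  refine ⟨⟨i1, hi1, ?_, hdesc, hk⟩, hlow⟩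
  -- `τ` maps the positions `≥ r` among themselves, so `τ x.2` stays right of `i1`
  by_contra! hle
  have hfix : τ (τ x.2) = τ x.2 := hτ _ (by rw [Fin.le_def] at hle; omega)
  exact absurd (τ.injective hfix ▸ hle) (not_le.mpr hlt)

lemma card_lowOccurrences_mul {r : ℕ} {σ τ : Perm (Fin n)}
    (hτ : ∀ x : Fin n, (x : ℕ) < r → τ x = x) :
    (lowOccurrences r (σ * τ)).card = (lowOccurrences r σ).card := by
  have hτ' : ∀ x : Fin n, (x : ℕ) < r → τ⁻¹ x = x := fun x hx => by
    rw [Perm.inv_eq_iff_eq, hτ x hx]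
  refine card_nbij' (fun x => (x.1, τ x.2)) (fun x => (x.1, τ⁻¹ x.2)) ?_ ?_ ?_ ?_
  · exact fun x hx => mem_lowOccurrences_of_mul hτ hx
  · intro x hx
    exact mem_lowOccurrences_of_mul (σ := σ * τ) hτ' (by rwa [mul_inv_cancel_right])
  all_goals intro x _; simp

def nearlySorted (n r : ℕ) : Finset (Perm (Fin n)) :=
  {σ | (∀ j k : Fin n, r ≤ j → j < k → σ j < σ k) ∧
    ∀ j k : Fin n, (j : ℕ) + 1 = r → r < k → σ j < σ k}

lemma mem_nearlySorted {r : ℕ} {σ : Perm (Fin n)} :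
    σ ∈ nearlySorted n r ↔ (∀ j k : Fin n, r ≤ j → j < k → σ j < σ k) ∧
      ∀ j k : Fin n, (j : ℕ) + 1 = r → r < k → σ j < σ k := by
  simp [nearlySorted]

lemma swap_apply_of_val_ne {a b x : Fin n} (ha : (x : ℕ) ≠ a) (hb : (x : ℕ) ≠ b) :
    swap a b x = x :=
  swap_apply_of_ne_of_ne (Fin.ne_of_val_ne ha) (Fin.ne_of_val_ne hb)

section AdjacentSwap

variable {a b : Fin n} {σ : Perm (Fin n)}

lemma mul_swap_mem_nearlySorted (hab : (b : ℕ) = a + 1) (hσ : σ ∈ nearlySorted n (a + 1)) :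
    σ * swap a b ∈ nearlySorted n (a + 1) := by
  rw [mem_nearlySorted] at hσ ⊢
  obtain ⟨hsorted, hpivot⟩ := hσ
  constructor
  · intro j k hj hjk
    rw [Fin.lt_def] at hjk
    rw [Perm.mul_apply, Perm.mul_apply, swap_apply_of_val_ne (x := k) (by omega) (by omega)]
    by_cases hjb : j = b
    · rw [hjb, swap_apply_right]
      exact hpivot a k rfl (by omega)
    · rw [swap_apply_of_val_ne (by omega) (Fin.val_ne_of_ne hjb)]
      exact hsorted j k hj (Fin.lt_def.mpr hjk)
  · intro j k hj hk
    rw [Perm.mul_apply, Perm.mul_apply, Fin.ext (by omega : (j : ℕ) = a), swap_apply_left,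
      swap_apply_of_val_ne (x := k) (by omega) (by omega)]
    exact hsorted b k (by omega) (Fin.lt_def.mpr (by omega))

lemma occurrence_eq_pivot_of_mem_nearlySorted (hab : (b : ℕ) = a + 1)
    (hσ : σ ∈ nearlySorted n (a + 1)) {x : Fin n × Fin n} (hx : x ∈ occurrences σ)
    (hhigh : ¬ (x.1 : ℕ) + 1 < a) :
    (x.1 : ℕ) + 1 = a ∧ x.2 = b ∧ σ b < σ a ∧ σ a < σ x.1 := by
  obtain ⟨hsorted, hpivot⟩ := mem_nearlySorted.mp hσ
  obtain ⟨i1, hi1, hlt, hdesc, hk⟩ := mem_occurrences.mp hx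
  rw [Fin.lt_def] at hlt
  by_cases hia : (i1 : ℕ) = a
  · obtain rfl : i1 = a := Fin.ext hia
    by_cases hkb : (x.2 : ℕ) = b
    · obtain rfl : x.2 = b := Fin.ext hkb
      exact ⟨by omega, rfl, hk, hdesc⟩
    · exact absurd (hpivot i1 x.2 (by omega) (by omega)) (not_lt.mpr hk.le)
  · by_cases hxa : (x.1 : ℕ) = a
    · exact absurd (hsorted i1 x.2 (by omega) (Fin.lt_def.mpr hlt)) (not_lt.mpr hk.le)
    · exact absurd (hsorted x.1 i1 (by omega) (Fin.lt_def.mpr (by omega))) (not_lt.mpr hdesc.le)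

lemma card_occurrences_of_mem_nearlySorted (hab : (b : ℕ) = a + 1)
    (hσ : σ ∈ nearlySorted n (a + 1)) :
    (occurrences σ).card = (lowOccurrences a σ).card +
      if ∃ j : Fin n, (j : ℕ) + 1 = a ∧ σ b < σ a ∧ σ a < σ j then 1 else 0 := by
  rw [← card_filter_add_card_filter_not (p := fun x : Fin n × Fin n => (x.1 : ℕ) + 1 < a)]
  congr 1
  split_ifs with hpeak
  · obtain ⟨j, hj, hba, haj⟩ := hpeak
    rw [card_eq_one]
    refine ⟨(j, b), ext fun x => ?_⟩
    simp only [mem_filter, mem_singleton]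
    constructor
    · rintro ⟨hx, hhigh⟩
      obtain ⟨h1, h2, -⟩ := occurrence_eq_pivot_of_mem_nearlySorted hab hσ hx hhigh
      exact Prod.ext (Fin.ext (show (x.1 : ℕ) = j by omega)) h2
    · rintro rfl
      have hlt : a < b := Fin.lt_def.mpr (by omega)
      exact ⟨mem_occurrences.mpr ⟨a, hj.symm, hlt, haj, hba⟩, show ¬ (j : ℕ) + 1 < a by omega⟩
  · rw [card_eq_zero, filter_eq_empty_iff]
    intro x hx hhigh
    obtain ⟨h1, -, h3, h4⟩ := occurrence_eq_pivot_of_mem_nearlySorted hab hσ hx hhigh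
    exact hpeak ⟨x.1, h1, h3, h4⟩

lemma weight_add_weight_mul_swap (hab : (b : ℕ) = a + 1) (hσ : σ ∈ nearlySorted n (a + 1))
    (hlt : σ a < σ b) :
    weight σ + weight (σ * swap a b) =
      if ∃ j : Fin n, (j : ℕ) + 1 = a ∧ σ b < σ j then 0 else 2 * weight σ := by
  have hfix : ∀ x : Fin n, (x : ℕ) < a → swap a b x = x := fun x hx =>
    swap_apply_of_val_ne (by omega) (by omega)
  have hnone : ¬ ∃ j : Fin n, (j : ℕ) + 1 = a ∧ σ b < σ a ∧ σ a < σ j :=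
    fun ⟨_, _, hba, _⟩ => absurd hlt (not_lt.mpr hba.le)
  have hswap : (∃ j : Fin n, (j : ℕ) + 1 = a ∧ (σ * swap a b) b < (σ * swap a b) a ∧
      (σ * swap a b) a < (σ * swap a b) j) ↔ ∃ j : Fin n, (j : ℕ) + 1 = a ∧ σ b < σ j := by
    simp only [Perm.mul_apply, swap_apply_left, swap_apply_right]
    refine exists_congr fun j => and_congr_right fun hj => ?_
    rw [swap_apply_of_val_ne (by omega) (by omega)]
    exact and_iff_right hlt
  rw [weight, weight, card_occurrences_of_mem_nearlySorted hab hσ,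
    card_occurrences_of_mem_nearlySorted hab (mul_swap_mem_nearlySorted hab hσ),
    card_lowOccurrences_mul hfix, if_neg hnone]
  simp only [hswap]
  split_ifs <;> ring

lemma filter_nearlySorted_succ (hab : (b : ℕ) = a + 1) :
    (nearlySorted n (a + 1)).filter
        (fun σ => σ a < σ b ∧ ¬ ∃ j : Fin n, (j : ℕ) + 1 = a ∧ σ b < σ j) =
      nearlySorted n a := by
  ext σ
  simp only [mem_filter, mem_nearlySorted, not_exists, not_and, not_lt]
  constructor
  · rintro ⟨⟨hsorted, hpivot⟩, hasc, hbelow⟩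
    refine ⟨fun j k hj hjk => ?_, fun j k hj hk => ?_⟩
    · rw [Fin.lt_def] at hjk
      by_cases hja : (j : ℕ) = a
      · rw [Fin.ext hja]
        by_cases hkb : (k : ℕ) = b
        · rwa [Fin.ext hkb]
        · exact hpivot a k rfl (by omega)
      · exact hsorted j k (by omega) (Fin.lt_def.mpr hjk)
    · have hjb : σ j < σ b :=
        (hbelow j hj).lt_of_ne fun h => absurd (congrArg Fin.val (σ.injective h)) (by omega)
      by_cases hkb : (k : ℕ) = b
      · rwa [Fin.ext hkb]
      · exact hjb.trans (hsorted b k (by omega) (Fin.lt_def.mpr (by omega)))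
  · rintro ⟨hsorted, hpivot⟩
    refine ⟨⟨fun j k hj hjk => hsorted j k (by omega) hjk,
      fun j k hj hk => hsorted j k (by omega) (Fin.lt_def.mpr (by omega))⟩,
      hsorted a b le_rfl (Fin.lt_def.mpr (by omega)),
      fun j hj => (hpivot j b hj (by omega)).le⟩

lemma sum_weight_nearlySorted_succ (hab : (b : ℕ) = a + 1) :
    ∑ σ ∈ nearlySorted n (a + 1), weight σ = 2 * ∑ σ ∈ nearlySorted n a, weight σ := by
  have hne : ∀ σ : Perm (Fin n), σ b ≠ σ a := fun σ h =>
    absurd (congrArg Fin.val (σ.injective h)) (by omega)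
  have hswap : ∀ σ : Perm (Fin n), (σ * swap a b) a < (σ * swap a b) b ↔ ¬ σ a < σ b := by
    intro σ
    simp only [Perm.mul_apply, swap_apply_left, swap_apply_right, not_lt]
    exact ⟨le_of_lt, fun h => h.lt_of_ne (hne σ)⟩
  rw [sum_eq_sum_filter_add_involution (p := fun σ => σ a < σ b) weight (· * swap a b)
      (fun σ hσ => mul_swap_mem_nearlySorted hab hσ) (fun σ _ => mul_swap_mul_self a b σ)
      (fun σ _ => hswap σ),
    sum_congr rfl fun σ hσ => weight_add_weight_mul_swap hab (mem_filter.mp hσ).1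
      (mem_filter.mp hσ).2,
    sum_ite, sum_const_zero, zero_add, ← mul_sum, filter_filter, filter_nearlySorted_succ hab]

end AdjacentSwap

lemma nearlySorted_zero : nearlySorted n 0 = {1} := by
  ext σ
  rw [mem_nearlySorted, mem_singleton]
  constructor
  · rintro ⟨hsorted, -⟩
    exact Equiv.ext fun x => StrictMono.apply_eq fun j k => hsorted j k (Nat.zero_le _)
  · rintro rfl
    exact ⟨fun _ _ _ h => h, fun _ _ h => absurd h (Nat.succ_ne_zero _)⟩

lemma nearlySorted_pred_self : nearlySorted n (n - 1) = univ := by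
  refine eq_univ_of_forall fun σ => mem_nearlySorted.mpr ⟨fun j k hj hjk => ?_, fun j k _ hk => ?_⟩
  · have := Fin.lt_def.mp hjk
    omega
  · omega

lemma weight_one : weight (1 : Perm (Fin n)) = 1 := by
  rw [weight, card_eq_zero.mpr, pow_zero]
  refine eq_empty_of_forall_notMem fun x hx => ?_
  obtain ⟨i1, hi1, -, hdesc, -⟩ := mem_occurrences.mp hx
  rw [Perm.one_apply, Perm.one_apply, Fin.lt_def] at hdesc
  omega

lemma sum_weight_nearlySorted {r : ℕ} (hr : r < n) :
    ∑ σ ∈ nearlySorted n r, weight σ = 2 ^ r := by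
  induction r with
  | zero => rw [nearlySorted_zero, sum_singleton, weight_one, pow_zero]
  | succ r ih =>
    rw [sum_weight_nearlySorted_succ (a := ⟨r, by omega⟩) (b := ⟨r + 1, hr⟩) rfl, ih (by omega),
      pow_succ, mul_comm]

end Vincular321

/-- The generating function of the number of occurrences of the vincular
pattern `32-1` on `S_n` evaluated at `q = -1` equals `2^(n-1)`. An occurrence
is a pair of indices `(i,k)` with `i+1 < k` and `σ i > σ (i+1) > σ k`. -/
theorem pattern_32_1_q_eq_neg_one (n : ℕ) (hn : 0 < n) :
    ∑ σ : Equiv.Perm (Fin n),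
      (-1 : ℤ) ^ (univ.filter (fun p : Fin n × Fin n =>
        ∃ i1 : Fin n, (i1 : ℕ) = (p.1 : ℕ) + 1 ∧ i1 < p.2 ∧
          σ i1 < σ p.1 ∧ σ p.2 < σ i1)).card
      = 2 ^ (n - 1) := by
  rw [← Vincular321.nearlySorted_pred_self]
  exact Vincular321.sum_weight_nearlySorted (by omega)
end

section
/- For every positive integer n, the sum over all permutations σ of [n] of (-1) raised to the sum of the number of left-to-right maxima and the number of right-to-left minima of σ equals 2^(⌊n/2⌋). (Hence this statistic exhibits the cyclic sieving phenomenon with respect to any involution on S_n with 2^(⌊n/2⌋) fixed points, such as the Alexandersson–Kebede map.) -/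
/-!
Swapping the first two entries of a permutation of `Fin (n + 2)` leaves the contribution of the
later positions unchanged and changes the statistic by an odd amount, unless these two entries are
the values `0` and `1`. The involution therefore cancels
every term except those of the permutations preserving `{0, 1}`; such a permutation is a pair
`(ρ, π) ∈ S₂ × Sₙ`, and its statistic is that of `π` plus an even number. Hence the sum for
`n + 2` is twice the sum for `n`.
-/

open Finset Equiv

lemma neg_one_pow_add_neg_one_pow_of_odd {R : Type*} [Ring R] {a b : ℕ} (h : Odd (a + b)) :
    (-1 : R) ^ a + (-1) ^ b = 0 := by
  rcases Nat.even_or_odd a with ha | ha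
  · rw [ha.neg_one_pow, (Nat.odd_add'.mp h |>.mpr ha).neg_one_pow, add_neg_cancel]
  · rw [ha.neg_one_pow, ((Nat.odd_add.mp h).mp ha).neg_one_pow, neg_add_cancel]

section Statistic

variable {α β : Type*} [LinearOrder α] [LinearOrder β] {m : ℕ}

def lrMaxima (f : Fin m → α) : Finset (Fin m) := {i | ∀ j, j < i → f j < f i}

def rlMinima (f : Fin m → α) : Finset (Fin m) := {i | ∀ j, i < j → f i < f j}

def lrMaxRlMin (f : Fin m → α) : ℕ := #(lrMaxima f) + #(rlMinima f)

lemma lrMaxRlMin_comp_strictMono {φ : α → β} (hφ : StrictMono φ) (f : Fin m → α) :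
    lrMaxRlMin (φ ∘ f) = lrMaxRlMin f := by
  simp only [lrMaxRlMin, lrMaxima, rlMinima, Function.comp_apply, hφ.lt_iff_lt]

lemma card_filter_univ_fin_add_two (p : Fin (m + 2) → Prop) [DecidablePred p] :
    #{i | p i} =
      (if p 0 then 1 else 0) + (if p 1 then 1 else 0) + #{i : Fin m | p i.succ.succ} := by
  simp only [Fin.card_filter_univ_succ', Fin.succ_zero_eq_one, add_assoc]
  congr

lemma card_lrMaxima_add_two (f : Fin (m + 2) → α) :
    #(lrMaxima f) = 1 + (if f 0 < f 1 then 1 else 0) +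
      #{i ∈ lrMaxima (fun i => f i.succ.succ) | max (f 0) (f 1) < f i.succ.succ} := by
  rw [lrMaxima, card_filter_univ_fin_add_two, lrMaxima, filter_filter]
  simp [Fin.forall_fin_succ, Fin.succ_lt_succ_iff, Fin.succ_pos, and_comm, and_assoc]

lemma card_rlMinima_add_two (f : Fin (m + 2) → α) :
    #(rlMinima f) = (if f 0 < f 1 ∧ ∀ i : Fin m, f 0 < f i.succ.succ then 1 else 0) +
      (if ∀ i : Fin m, f 1 < f i.succ.succ then 1 else 0) +
      #(rlMinima fun i => f i.succ.succ) := by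
  rw [rlMinima, card_filter_univ_fin_add_two, rlMinima]
  simp [Fin.forall_fin_succ, Fin.succ_lt_succ_iff, Fin.succ_pos, Fin.one_lt_succ_succ]

lemma odd_lrMaxRlMin_add_comp_swap (f : Fin (m + 2) → α) (hf : f 0 ≠ f 1)
    (h : ¬∀ i : Fin m, max (f 0) (f 1) < f i.succ.succ) :
    Odd (lrMaxRlMin f + lrMaxRlMin (f ∘ swap 0 1)) := by
  have swap_succ_succ (i : Fin m) : swap (0 : Fin (m + 2)) 1 i.succ.succ = i.succ.succ :=
    swap_apply_of_ne_of_ne (Fin.succ_ne_zero _) (Fin.succ_succ_ne_one i)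
  simp only [lrMaxRlMin, card_lrMaxima_add_two, card_rlMinima_add_two, Function.comp_apply,
    swap_apply_left, swap_apply_right, swap_succ_succ, max_comm (f 1)]
  rw [Nat.odd_iff]
  rcases hf.lt_or_gt with hab | hab
  · have hb : ¬∀ i : Fin m, f 1 < f i.succ.succ := by rwa [max_eq_right hab.le] at h
    simp only [hab, hab.not_gt, hb, true_and, false_and, if_true, if_false]
    split_ifs <;> omega
  · have ha : ¬∀ i : Fin m, f 0 < f i.succ.succ := by rwa [max_eq_left hab.le] at h
    simp only [hab, hab.not_gt, ha, true_and, false_and, if_true, if_false]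
    split_ifs <;> omega

lemma neg_one_pow_lrMaxRlMin_of_max_lt (f : Fin (m + 2) → α)
    (h : ∀ i : Fin m, max (f 0) (f 1) < f i.succ.succ) :
    (-1 : ℤ) ^ lrMaxRlMin f = (-1) ^ lrMaxRlMin (fun i => f i.succ.succ) := by
  have hlr : {i ∈ lrMaxima (fun i => f i.succ.succ) | max (f 0) (f 1) < f i.succ.succ} =
      lrMaxima (fun i => f i.succ.succ) := filter_true_of_mem fun i _ => h i
  have h0 : ∀ i : Fin m, f 0 < f i.succ.succ := fun i => (max_lt_iff.mp (h i)).1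
  have h1 : ∀ i : Fin m, f 1 < f i.succ.succ := fun i => (max_lt_iff.mp (h i)).2
  have hstat : lrMaxRlMin f =
      lrMaxRlMin (fun i => f i.succ.succ) + 2 * (1 + if f 0 < f 1 then 1 else 0) := by
    simp only [lrMaxRlMin, card_lrMaxima_add_two, card_rlMinima_add_two, hlr, h0, h1,
      implies_true, and_true, if_true]
    omega
  rw [hstat, pow_add, pow_mul, neg_one_sq, one_pow, mul_one]

end Statistic

section BlockPermutations

variable {n : ℕ}

def finTwoSumEquiv (n : ℕ) : Fin 2 ⊕ Fin n ≃ Fin (n + 2) :=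
  finSumFinEquiv.trans (finCongr (Nat.add_comm 2 n))

lemma finTwoSumEquiv_inl_zero : finTwoSumEquiv n (.inl 0) = 0 := by
  simp [finTwoSumEquiv, Fin.ext_iff]

lemma finTwoSumEquiv_inl_one : finTwoSumEquiv n (.inl 1) = 1 := by
  simp [finTwoSumEquiv, Fin.ext_iff]

lemma finTwoSumEquiv_inr (i : Fin n) : finTwoSumEquiv n (.inr i) = i.succ.succ :=
  Fin.ext (by simp [finTwoSumEquiv])

lemma finTwoSumEquiv_inl_lt_inr (k : Fin 2) (i : Fin n) :
    finTwoSumEquiv n (.inl k) < finTwoSumEquiv n (.inr i) := by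
  simpa [finTwoSumEquiv, Fin.lt_def] using Nat.lt_add_left _ k.isLt

lemma exists_finTwoSumEquiv_inl_eq {x : Fin (n + 2)} (hx : x ≤ 1) :
    ∃ k, finTwoSumEquiv n (.inl k) = x :=
  ⟨⟨x, by rw [Fin.le_def, Fin.val_one] at hx; omega⟩, Fin.ext (by simp [finTwoSumEquiv])⟩

def blockPerm (n : ℕ) (p : Perm (Fin 2) × Perm (Fin n)) : Perm (Fin (n + 2)) :=
  (finTwoSumEquiv n).permCongr (Perm.sumCongrHom _ _ p)

lemma blockPerm_injective : Function.Injective (blockPerm n) :=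
  (finTwoSumEquiv n).permCongr.injective.comp Perm.sumCongrHom_injective

lemma blockPerm_apply_finTwoSumEquiv (p : Perm (Fin 2) × Perm (Fin n)) (x : Fin 2 ⊕ Fin n) :
    blockPerm n p (finTwoSumEquiv n x) = finTwoSumEquiv n (Sum.map p.1 p.2 x) := by
  simp [blockPerm, permCongr_apply]

lemma blockPerm_apply_succ_succ (p : Perm (Fin 2) × Perm (Fin n)) (i : Fin n) :
    blockPerm n p i.succ.succ = (p.2 i).succ.succ := by
  rw [← finTwoSumEquiv_inr, blockPerm_apply_finTwoSumEquiv, Sum.map_inr, finTwoSumEquiv_inr]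

lemma max_le_one_of_forall_max_lt (σ : Perm (Fin (n + 2)))
    (h : ∀ i : Fin n, max (σ 0) (σ 1) < σ i.succ.succ) : max (σ 0) (σ 1) ≤ 1 := by
  have hcard : n ≤ #(Ioi (max (σ 0) (σ 1))) := by
    simpa using card_le_card_of_injOn (s := univ) (fun i : Fin n => σ i.succ.succ)
      (fun i _ => mem_Ioi.mpr (h i))
      (fun i _ j _ hij => Fin.succ_injective _ (Fin.succ_injective _ (σ.injective hij)))
  rw [Fin.card_Ioi] at hcard
  rw [Fin.le_def, Fin.val_one]
  omega

lemma exists_blockPerm_eq_iff (σ : Perm (Fin (n + 2))) :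
    (∃ p, blockPerm n p = σ) ↔ ∀ i : Fin n, max (σ 0) (σ 1) < σ i.succ.succ := by
  constructor
  · rintro ⟨p, rfl⟩ i
    rw [← finTwoSumEquiv_inl_zero, ← finTwoSumEquiv_inl_one, ← finTwoSumEquiv_inr,
      blockPerm_apply_finTwoSumEquiv, blockPerm_apply_finTwoSumEquiv,
      blockPerm_apply_finTwoSumEquiv]
    exact max_lt (finTwoSumEquiv_inl_lt_inr _ _) (finTwoSumEquiv_inl_lt_inr _ _)
  · intro h
    have hle := max_le_one_of_forall_max_lt σ h
    set τ := (finTwoSumEquiv n).permCongr.symm σ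
    have hτ : Set.MapsTo τ (Set.range Sum.inl) (Set.range Sum.inl) := by
      rintro _ ⟨k, rfl⟩
      have hk : σ (finTwoSumEquiv n (.inl k)) ≤ 1 := by
        fin_cases k
        · simpa [finTwoSumEquiv_inl_zero] using (le_max_left _ _).trans hle
        · simpa [finTwoSumEquiv_inl_one] using (le_max_right _ _).trans hle
      obtain ⟨k', hk'⟩ := exists_finTwoSumEquiv_inl_eq hk
      exact ⟨k', by simp [τ, permCongr_apply, ← hk']⟩
    obtain ⟨p, hp⟩ := Perm.mem_sumCongrHom_range_of_perm_mapsTo_inl hτ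
    exact ⟨p, by rw [blockPerm, hp, apply_symm_apply]⟩

def lrMaxRlMinAtNegOne (n : ℕ) : ℤ := ∑ σ : Perm (Fin n), (-1) ^ lrMaxRlMin σ

lemma sum_neg_one_pow_lrMaxRlMin_of_max_lt :
    ∑ σ ∈ {σ : Perm (Fin (n + 2)) | ∀ i : Fin n, max (σ 0) (σ 1) < σ i.succ.succ},
      (-1 : ℤ) ^ lrMaxRlMin σ = 2 * lrMaxRlMinAtNegOne n := by
  have himage : ({σ | ∀ i : Fin n, max (σ 0) (σ 1) < σ i.succ.succ} : Finset (Perm (Fin (n + 2))))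
      = univ.image (blockPerm n) := by
    ext σ
    simp only [mem_filter, mem_univ, true_and, mem_image]
    exact (exists_blockPerm_eq_iff σ).symm
  have hsign (p : Perm (Fin 2) × Perm (Fin n)) :
      (-1 : ℤ) ^ lrMaxRlMin (blockPerm n p) = (-1) ^ lrMaxRlMin p.2 := by
    rw [neg_one_pow_lrMaxRlMin_of_max_lt _ ((exists_blockPerm_eq_iff _).mp ⟨p, rfl⟩)]
    simp only [blockPerm_apply_succ_succ]
    exact congrArg _ (lrMaxRlMin_comp_strictMono (Fin.strictMono_succ.comp Fin.strictMono_succ) _)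
  rw [himage, sum_image blockPerm_injective.injOn, Fintype.sum_congr _ _ hsign,
    Fintype.sum_prod_type]
  simp only [sum_const, card_univ, Fintype.card_perm, Fintype.card_fin, Nat.factorial_two,
    nsmul_eq_mul, Nat.cast_ofNat, lrMaxRlMinAtNegOne]

lemma sum_neg_one_pow_lrMaxRlMin_of_not_max_lt :
    ∑ σ ∈ {σ : Perm (Fin (n + 2)) | ¬∀ i : Fin n, max (σ 0) (σ 1) < σ i.succ.succ},
      (-1 : ℤ) ^ lrMaxRlMin σ = 0 := by
  have swap_succ_succ (i : Fin n) : swap (0 : Fin (n + 2)) 1 i.succ.succ = i.succ.succ :=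
    swap_apply_of_ne_of_ne (Fin.succ_ne_zero _) (Fin.succ_succ_ne_one i)
  refine sum_involution (fun σ _ => σ * swap 0 1) (fun σ hσ => ?_) (fun σ _ _ => ?_)
    (fun σ hσ => ?_) (fun σ _ => mul_swap_mul_self 0 1 σ)
  · rw [mem_filter] at hσ
    exact neg_one_pow_add_neg_one_pow_of_odd
      (odd_lrMaxRlMin_add_comp_swap σ (σ.injective.ne Fin.zero_ne_one) hσ.2)
  · simp [swap_eq_one_iff]
  · simp only [mem_filter, mem_univ, true_and, Perm.mul_apply, swap_apply_left, swap_apply_right,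
      swap_succ_succ, max_comm (σ 1)] at hσ ⊢
    exact hσ

lemma lrMaxRlMinAtNegOne_add_two : lrMaxRlMinAtNegOne (n + 2) = 2 * lrMaxRlMinAtNegOne n := by
  rw [lrMaxRlMinAtNegOne, ← sum_filter_add_sum_filter_not univ
    (fun σ : Perm (Fin (n + 2)) => ∀ i : Fin n, max (σ 0) (σ 1) < σ i.succ.succ),
    sum_neg_one_pow_lrMaxRlMin_of_max_lt, sum_neg_one_pow_lrMaxRlMin_of_not_max_lt, add_zero]

lemma lrMaxRlMinAtNegOne_eq : ∀ n, lrMaxRlMinAtNegOne n = 2 ^ (n / 2)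
  | 0 => by decide
  | 1 => by decide
  | n + 2 => by
    rw [lrMaxRlMinAtNegOne_add_two, lrMaxRlMinAtNegOne_eq n, Nat.add_div_right n two_pos,
      pow_succ, mul_comm]

end BlockPermutations

theorem lr_max_plus_rl_min_q_eq_neg_one_general (n : ℕ) :
    ∑ σ : Equiv.Perm (Fin n),
      (-1 : ℤ) ^ ((univ.filter (fun i : Fin n => ∀ j : Fin n, j < i → σ j < σ i)).card +
                  (univ.filter (fun i : Fin n => ∀ j : Fin n, i < j → σ i < σ j)).card)
      = 2 ^ (n / 2) :=
  lrMaxRlMinAtNegOne_eq n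

/-- The generating function of the sum of the numbers of left-to-right maxima
and right-to-left minima on `S_n` evaluated at `q = -1` equals `2^⌊n/2⌋`. -/
theorem lr_max_plus_rl_min_q_eq_neg_one (n : ℕ) (hn : 0 < n) :
    ∑ σ : Equiv.Perm (Fin n),
      (-1 : ℤ) ^ ((univ.filter (fun i : Fin n => ∀ j : Fin n, j < i → σ j < σ i)).card +
                  (univ.filter (fun i : Fin n => ∀ j : Fin n, i < j → σ i < σ j)).card)
      = 2 ^ (n / 2) :=
  lr_max_plus_rl_min_q_eq_neg_one_general n
end

section
/- Let n be a positive integer and let σ be a permutation of [n] such that for every odd index i with i+1 ≤ n, the set {σ(i), σ(i+1)} equals {i, i+1} (a 'decisive' permutation, i.e., a fixed point of the Alexandersson–Kebede map). Then the number of left-to-right maxima of σ equals the number of right-to-left minima of σ. -/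
open Finset

/-- partner map: swaps within each even/odd pair, fixes leftover last index -/
def pairSwapAK (n : ℕ) (a : Fin n) : Fin n :=
  if a.val % 2 = 0 then
    (if h : a.val + 1 < n then ⟨a.val + 1, h⟩ else a)
  else ⟨a.val - 1, Nat.lt_of_le_of_lt (Nat.sub_le _ _) a.isLt⟩


/-- For a decisive permutation (a fixed point of the Alexandersson–Kebede
map), the number of left-to-right maxima equals the number of right-to-left
minima. Indices here are 0-based: 1-based odd indices correspond to 0-based
even indices. -/

theorem decisive_lr_max_eq_rl_min (n : ℕ) (hn : 0 < n) (σ : Equiv.Perm (Fin n))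
    (hdec : ∀ i : ℕ, i % 2 = 0 → ∀ h : i + 1 < n,
      (σ ⟨i, Nat.lt_of_succ_lt h⟩ = ⟨i, Nat.lt_of_succ_lt h⟩ ∧
        σ ⟨i + 1, h⟩ = ⟨i + 1, h⟩) ∨
      (σ ⟨i, Nat.lt_of_succ_lt h⟩ = ⟨i + 1, h⟩ ∧
        σ ⟨i + 1, h⟩ = ⟨i, Nat.lt_of_succ_lt h⟩)) :
    (univ.filter (fun i : Fin n => ∀ j : Fin n, j < i → σ j < σ i)).card =
    (univ.filter (fun i : Fin n => ∀ j : Fin n, i < j → σ i < σ j)).card := by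
  -- value-level version of hdec
  have key : ∀ i : ℕ, i % 2 = 0 → ∀ h : i + 1 < n,
      ((σ ⟨i, Nat.lt_of_succ_lt h⟩).val = i ∧ (σ ⟨i + 1, h⟩).val = i + 1) ∨
      ((σ ⟨i, Nat.lt_of_succ_lt h⟩).val = i + 1 ∧ (σ ⟨i + 1, h⟩).val = i) := by
    intro i hi h
    rcases hdec i hi h with ⟨h1, h2⟩ | ⟨h1, h2⟩
    · exact Or.inl ⟨by rw [h1], by rw [h2]⟩
    · exact Or.inr ⟨by rw [h1], by rw [h2]⟩
  -- odd indices
  have hodd : ∀ j : Fin n, j.val % 2 = 1 →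
      ((σ j).val = j.val ∧ (σ ⟨j.val - 1, Nat.lt_of_le_of_lt (Nat.sub_le _ _) j.isLt⟩).val = j.val - 1) ∨
      ((σ j).val = j.val - 1 ∧ (σ ⟨j.val - 1, Nat.lt_of_le_of_lt (Nat.sub_le _ _) j.isLt⟩).val = j.val) := by
    intro j hj
    have h1 : j.val - 1 + 1 < n := by
      have := j.isLt; omega
    have hjj : (⟨j.val - 1 + 1, h1⟩ : Fin n) = j := by
      apply Fin.ext; simp; omega
    have hjj' : (⟨j.val - 1, Nat.lt_of_succ_lt h1⟩ : Fin n)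
        = ⟨j.val - 1, Nat.lt_of_le_of_lt (Nat.sub_le _ _) j.isLt⟩ := rfl
    have := key (j.val - 1) (by omega) h1
    rw [hjj, hjj'] at this
    rcases this with ⟨ha, hb⟩ | ⟨ha, hb⟩
    · exact Or.inl ⟨by omega, by omega⟩
    · exact Or.inr ⟨by omega, by omega⟩
  -- upper bounds
  have hub_odd : ∀ j : Fin n, j.val % 2 = 1 → (σ j).val ≤ j.val := by
    intro j hj
    rcases hodd j hj with ⟨h1, _⟩ | ⟨h1, _⟩ <;> omega
  have hub : ∀ j : Fin n, (σ j).val ≤ j.val + 1 := by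
    intro j
    rcases Nat.even_or_odd j.val with he | ho
    · by_cases h : j.val + 1 < n
      · have hjj : (⟨j.val, Nat.lt_of_succ_lt h⟩ : Fin n) = j := by apply Fin.ext; rfl
        have := key j.val (Nat.even_iff.mp he) h
        rw [hjj] at this
        rcases this with ⟨h1, _⟩ | ⟨h1, _⟩ <;> omega
      · have h1 := (σ j).isLt; have h2 := j.isLt; omega
    · have := hub_odd j (Nat.odd_iff.mp ho); omega
  -- leftover last index is fixed
  have hlast : ∀ i : Fin n, i.val % 2 = 0 → ¬ (i.val + 1 < n) → σ i = i := by
    intro i hi hno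
    have hi1 : i.val = n - 1 := by have := i.isLt; omega
    -- every other index maps to something < n - 1
    have hother : ∀ k : Fin n, k.val ≠ i.val → (σ k).val ≠ i.val := by
      intro k hk
      have hklt : k.val < n - 1 := by have := k.isLt; omega
      rcases Nat.even_or_odd k.val with he | ho
      · have hke := Nat.even_iff.mp he
        -- k even, k < n-1, n-1 even, so k ≤ n-3
        have hkk : (⟨k.val, Nat.lt_of_succ_lt (by omega : k.val + 1 < n)⟩ : Fin n) = k := by
          apply Fin.ext; rfl
        have := key k.val hke (by omega)
        rw [hkk] at this
        have hk3 : k.val + 1 < n - 1 := by omega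
        rcases this with ⟨h1, _⟩ | ⟨h1, _⟩ <;> omega
      · have := hub_odd k (Nat.odd_iff.mp ho); omega
    -- surjectivity
    by_contra hne
    have hs : σ (σ.symm i) = i := σ.apply_symm_apply i
    have hne2 : (σ.symm i).val ≠ i.val := by
      intro h
      have : σ.symm i = i := Fin.ext h
      rw [this] at hs
      exact hne hs
    exact hother (σ.symm i) hne2 (by rw [hs])
  -- lower bound for even indices
  have hlb_even : ∀ j : Fin n, j.val % 2 = 0 → j.val ≤ (σ j).val := by
    intro j hj
    by_cases h : j.val + 1 < n
    · have hjj : (⟨j.val, Nat.lt_of_succ_lt h⟩ : Fin n) = j := by apply Fin.ext; rfl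
      have := key j.val hj h
      rw [hjj] at this
      rcases this with ⟨h1, _⟩ | ⟨h1, _⟩ <;> omega
    · rw [hlast j hj h]
  -- coupling: fixed iff partner fixed
  have hcouple : ∀ i : ℕ, ∀ hi : i % 2 = 0, ∀ h : i + 1 < n,
      (σ ⟨i, Nat.lt_of_succ_lt h⟩).val = i ↔ (σ ⟨i + 1, h⟩).val = i + 1 := by
    intro i hi h
    rcases key i hi h with ⟨h1, h2⟩ | ⟨h1, h2⟩ <;> omega
  -- characterization of LTR maxima
  have hPchar : ∀ i : Fin n, (∀ j : Fin n, j < i → σ j < σ i) ↔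
      (i.val % 2 = 0 ∨ σ i = i) := by
    intro i
    constructor
    · intro hp
      rcases Nat.even_or_odd i.val with he | ho
      · exact Or.inl (Nat.even_iff.mp he)
      · right
        have hio := Nat.odd_iff.mp ho
        rcases hodd i hio with ⟨h1, _⟩ | ⟨h1, h2⟩
        · exact Fin.ext h1
        · exfalso
          have hjlt : (⟨i.val - 1, Nat.lt_of_le_of_lt (Nat.sub_le _ _) i.isLt⟩ : Fin n) < i := by
            rw [Fin.lt_def]; simp; omega
          have := hp _ hjlt
          rw [Fin.lt_def] at this
          omega
    · intro hP j hj
      rw [Fin.lt_def] at hj ⊢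
      rcases Nat.even_or_odd i.val with he | ho
      · -- i even: always a max
        have hie := Nat.even_iff.mp he
        have h1 := hlb_even i hie
        rcases Nat.even_or_odd j.val with hje | hjo
        · have := hub j; have hje' := Nat.even_iff.mp hje; omega
        · have := hub_odd j (Nat.odd_iff.mp hjo); omega
      · -- i odd, σ i = i
        have hio := Nat.odd_iff.mp ho
        have hfix : (σ i).val = i.val := by
          rcases hP with h | h
          · omega
          · rw [h]
        rcases Nat.even_or_odd j.val with hje | hjo
        · have hje' := Nat.even_iff.mp hje
          by_cases hji : j.val + 1 = i.val
          · -- j is the partner of i; pair is fixed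
            have h1 : j.val + 1 < n := by rw [hji]; exact i.isLt
            have hjj : (⟨j.val, Nat.lt_of_succ_lt h1⟩ : Fin n) = j := by apply Fin.ext; rfl
            have hjj2 : (⟨j.val + 1, h1⟩ : Fin n) = i := by apply Fin.ext; simpa using hji
            have := key j.val hje' h1
            rw [hjj, hjj2] at this
            rcases this with ⟨h2, _⟩ | ⟨_, h2⟩ <;> omega
          · have := hub j; omega
        · have := hub_odd j (Nat.odd_iff.mp hjo); omega
  -- characterization of RTL minima
  have hQchar : ∀ i : Fin n, (∀ j : Fin n, i < j → σ i < σ j) ↔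
      (i.val % 2 = 1 ∨ σ i = i) := by
    intro i
    constructor
    · intro hq
      rcases Nat.even_or_odd i.val with he | ho
      · right
        have hie := Nat.even_iff.mp he
        by_cases h : i.val + 1 < n
        · have hii : (⟨i.val, Nat.lt_of_succ_lt h⟩ : Fin n) = i := by apply Fin.ext; rfl
          have hk := key i.val hie h
          rw [hii] at hk
          rcases hk with ⟨h1, _⟩ | ⟨h1, h2⟩
          · exact Fin.ext h1
          · exfalso
            have hjgt : i < (⟨i.val + 1, h⟩ : Fin n) := by rw [Fin.lt_def]; simp
            have := hq _ hjgt
            rw [Fin.lt_def] at this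
            omega
        · exact hlast i hie h
      · exact Or.inl (Nat.odd_iff.mp ho)
    · intro hQ j hj
      rw [Fin.lt_def] at hj ⊢
      rcases Nat.even_or_odd i.val with he | ho
      · -- i even with σ i = i
        have hie := Nat.even_iff.mp he
        have hfix : (σ i).val = i.val := by
          rcases hQ with h | h
          · omega
          · rw [h]
        rcases Nat.even_or_odd j.val with hje | hjo
        · have := hlb_even j (Nat.even_iff.mp hje); omega
        · -- j odd: if j = i+1, use coupling, else bound
          have hjo' := Nat.odd_iff.mp hjo
          by_cases hji : j.val = i.val + 1
          · have h1 : i.val + 1 < n := by rw [← hji]; exact j.isLt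
            have hii : (⟨i.val, Nat.lt_of_succ_lt h1⟩ : Fin n) = i := by apply Fin.ext; rfl
            have hjj : (⟨i.val + 1, h1⟩ : Fin n) = j := by apply Fin.ext; simp [hji]
            have := key i.val hie h1
            rw [hii, hjj] at this
            rcases this with ⟨_, h2⟩ | ⟨h2, _⟩ <;> omega
          · rcases hodd j (Nat.odd_iff.mp hjo) with ⟨h1, _⟩ | ⟨h1, _⟩ <;> omega
      · -- i odd: always a min
        have hio := Nat.odd_iff.mp ho
        have h1 := hub_odd i hio
        rcases Nat.even_or_odd j.val with hje | hjo
        · have := hlb_even j (Nat.even_iff.mp hje); omega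
        · have hjo' := Nat.odd_iff.mp hjo
          rcases hodd j hjo' with ⟨h2, _⟩ | ⟨h2, _⟩ <;> omega
  -- rewrite filters using characterizations
  have e1 : (univ.filter (fun i : Fin n => ∀ j : Fin n, j < i → σ j < σ i)) =
      (univ.filter (fun i : Fin n => i.val % 2 = 0 ∨ σ i = i)) := by
    apply filter_congr
    intro x _
    exact hPchar x
  have e2 : (univ.filter (fun i : Fin n => ∀ j : Fin n, i < j → σ i < σ j)) =
      (univ.filter (fun i : Fin n => i.val % 2 = 1 ∨ σ i = i)) := by
    apply filter_congr
    intro x _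
    exact hQchar x
  rw [e1, e2]
  -- bijection via the partner map
  have hfmem : ∀ a : Fin n, (a.val % 2 = 0 ∨ σ a = a) →
      ((pairSwapAK n a).val % 2 = 1 ∨ σ (pairSwapAK n a) = pairSwapAK n a) := by
    intro a ha
    unfold pairSwapAK
    rcases Nat.even_or_odd a.val with he | ho
    · have hae := Nat.even_iff.mp he
      rw [if_pos hae]
      by_cases h : a.val + 1 < n
      · rw [dif_pos h]; left; show (a.val + 1) % 2 = 1; omega
      · rw [dif_neg h]; right; exact hlast a hae h
    · -- a odd, so σ a = a; partner is fixed
      have hao := Nat.odd_iff.mp ho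
      rw [if_neg (by omega)]
      right
      have hfix : (σ a).val = a.val := by
        rcases ha with h | h
        · omega
        · rw [h]
      rcases hodd a hao with ⟨_, h2⟩ | ⟨h1, _⟩
      · exact Fin.ext h2
      · exfalso; omega
  have hgmem : ∀ a : Fin n, (a.val % 2 = 1 ∨ σ a = a) →
      ((pairSwapAK n a).val % 2 = 0 ∨ σ (pairSwapAK n a) = pairSwapAK n a) := by
    intro a ha
    unfold pairSwapAK
    rcases Nat.even_or_odd a.val with he | ho
    · -- a even, so σ a = a
      have hae := Nat.even_iff.mp he
      rw [if_pos hae]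
      have hfix : (σ a).val = a.val := by
        rcases ha with h | h
        · omega
        · rw [h]
      by_cases h : a.val + 1 < n
      · rw [dif_pos h]
        right
        have haa : (⟨a.val, Nat.lt_of_succ_lt h⟩ : Fin n) = a := by apply Fin.ext; rfl
        have := key a.val hae h
        rw [haa] at this
        rcases this with ⟨_, h2⟩ | ⟨h1, _⟩
        · exact Fin.ext h2
        · exfalso; omega
      · rw [dif_neg h]; left; exact hae
    · have hao := Nat.odd_iff.mp ho
      rw [if_neg (by omega)]; left; show (a.val - 1) % 2 = 0; omega
  have hinv : ∀ a : Fin n, pairSwapAK n (pairSwapAK n a) = a := by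
    intro a
    rcases Nat.even_or_odd a.val with he | ho
    · have hae := Nat.even_iff.mp he
      by_cases h : a.val + 1 < n
      · have e : pairSwapAK n a = ⟨a.val + 1, h⟩ := by
          unfold pairSwapAK; rw [if_pos hae, dif_pos h]
        rw [e]
        unfold pairSwapAK
        rw [if_neg (show ¬ ((a.val + 1) % 2 = 0) from by omega)]
        apply Fin.ext
        show a.val + 1 - 1 = a.val
        omega
      · have e : pairSwapAK n a = a := by
          unfold pairSwapAK; rw [if_pos hae, dif_neg h]
        rw [e, e]
    · have hao := Nat.odd_iff.mp ho
      have e : pairSwapAK n a = ⟨a.val - 1, Nat.lt_of_le_of_lt (Nat.sub_le _ _) a.isLt⟩ := by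
        unfold pairSwapAK; rw [if_neg (by omega)]
      rw [e]
      unfold pairSwapAK
      rw [if_pos (show ((a.val - 1) % 2 = 0) from by omega)]
      have h : (a.val - 1) + 1 < n := by have := a.isLt; omega
      rw [dif_pos h]
      apply Fin.ext
      show a.val - 1 + 1 = a.val
      omega
  apply Finset.card_bij' (fun a _ => pairSwapAK n a) (fun a _ => pairSwapAK n a)
  · intro a ha
    simp only [mem_filter, mem_univ, true_and] at ha ⊢
    exact hfmem a ha
  · intro a ha
    simp only [mem_filter, mem_univ, true_and] at ha ⊢
    exact hgmem a ha
  · intro a _; exact hinv a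
  · intro a _; exact hinv a
end

section
/- For every positive integer n, the sum over all permutations σ of [n] of (-1) raised to the number of invisible inversions of σ equals 2^(⌊n/2⌋). (Hence the number of invisible inversions exhibits the cyclic sieving phenomenon with respect to involutions on S_n with 2^(⌊n/2⌋) fixed points.) -/
/-!
On `Fin (k + 2)` let `τ` swap the two largest values `k` and `k + 1`. If a permutation `σ` puts
one of these values at a position `x < k`, then `τ * σ` has the same invisible inversions as `σ`
except for the pair of positions carrying `k` and `k + 1`, whose status flips. So `σ ↦ τ * σ` is a
sign-reversing involution on all permutations except the block permutations `π ⊕ ρ` with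
`π ∈ S_k`, `ρ ∈ S_2`, and such a block permutation has exactly the invisible inversions of `π`.
Hence the signed count satisfies `S (k + 2) = 2 * S k`, with `S 0 = S 1 = 1`.
-/

open Finset Equiv

namespace InvisibleInversions

variable {n k : ℕ}

def invisibleInversions (σ : Perm (Fin n)) : Finset (Fin n × Fin n) :=
  {p | p.1 < p.2 ∧ σ p.2 < σ p.1 ∧ p.1 < σ p.2}

def signedCount (n : ℕ) : ℤ := ∑ σ : Perm (Fin n), (-1) ^ #(invisibleInversions σ)

lemma neg_one_pow_card_filter_eq_neg_of_toggle {R α : Type*} [Monoid R] [HasDistribNeg R]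
    [Fintype α] {p q : α → Prop} [DecidablePred p] [DecidablePred q] (a : α)
    (ha : q a ↔ ¬ p a) (h : ∀ b ≠ a, q b ↔ p b) :
    (-1 : R) ^ #(univ.filter q) = -(-1) ^ #(univ.filter p) := by
  classical
  by_cases hpa : p a
  · have : univ.filter p = insert a (univ.filter q) := by
      ext b; by_cases hb : b = a <;> simp_all
    rw [this, card_insert_of_notMem (by simp [ha, hpa]), pow_succ, mul_neg_one, neg_neg]
  · have : univ.filter q = insert a (univ.filter p) := by
      ext b; by_cases hb : b = a <;> simp_all
    rw [this, card_insert_of_notMem (by simp [hpa]), pow_succ, mul_neg_one]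

def blockSum (k : ℕ) : Perm (Fin k) × Perm (Fin 2) →* Perm (Fin (k + 2)) :=
  finSumFinEquiv.permCongrHom.toMonoidHom.comp (Perm.sumCongrHom _ _)

lemma blockSum_injective : Function.Injective (blockSum k) :=
  finSumFinEquiv.permCongrHom.injective.comp Perm.sumCongrHom_injective

@[simp] lemma blockSum_apply_castAdd (x : Perm (Fin k) × Perm (Fin 2)) (i : Fin k) :
    blockSum k x (Fin.castAdd 2 i) = Fin.castAdd 2 (x.1 i) := by
  simp [blockSum, permCongrHom, permCongr_apply]

@[simp] lemma blockSum_apply_natAdd (x : Perm (Fin k) × Perm (Fin 2)) (j : Fin 2) :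
    blockSum k x (Fin.natAdd k j) = Fin.natAdd k (x.2 j) := by
  simp [blockSum, permCongrHom, permCongr_apply]

lemma mem_range_blockSum {σ : Perm (Fin (k + 2))}
    (h : ∀ x : Fin (k + 2), (x : ℕ) < k → (σ x : ℕ) < k) : σ ∈ (blockSum k).range := by
  obtain ⟨x, hx⟩ := Perm.mem_sumCongrHom_range_of_perm_mapsTo_inl
    (σ := finSumFinEquiv.permCongrHom.symm σ) (by
      rintro _ ⟨i, rfl⟩
      refine ⟨Fin.castLT (σ (Fin.castAdd 2 i)) (h _ i.isLt), ?_⟩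
      simp only [permCongrHom, MulEquiv.symm_mk, MulEquiv.coe_mk, permCongr_symm, permCongr_apply,
        symm_symm, finSumFinEquiv_apply_left]
      rw [eq_comm, symm_apply_eq, finSumFinEquiv_apply_left, Fin.castAdd_castLT])
  exact ⟨x, by simp only [blockSum, MonoidHom.comp_apply, hx, MulEquiv.coe_toMonoidHom,
    MulEquiv.apply_symm_apply]⟩

def topSwap (k : ℕ) : Perm (Fin (k + 2)) := swap (Fin.natAdd k 0) (Fin.natAdd k 1)

lemma topSwap_val (v : Fin (k + 2)) :
    (topSwap k v : ℕ) = if (v : ℕ) = k then k + 1 else if (v : ℕ) = k + 1 then k else v := by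
  simp only [topSwap, swap_apply_def, Fin.ext_iff, Fin.val_natAdd]
  split_ifs <;> simp_all

lemma topSwap_mem_range_blockSum : topSwap k ∈ (blockSum k).range :=
  mem_range_blockSum fun x hx => by rw [topSwap_val]; split_ifs <;> omega

lemma topSwap_lt_and_lt_topSwap_iff {i u v : Fin (k + 2)} (h : ¬(k ≤ (u : ℕ) ∧ k ≤ (v : ℕ))) :
    (topSwap k v < topSwap k u ∧ i < topSwap k v) ↔ (v < u ∧ i < v) := by
  simp only [Fin.lt_def, topSwap_val]
  split_ifs <;> omega

lemma topSwap_lt_and_lt_topSwap_iff_not {i u v : Fin (k + 2)} (hi : (i : ℕ) < k)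
    (hu : k ≤ (u : ℕ)) (hv : k ≤ (v : ℕ)) (huv : u ≠ v) :
    (topSwap k v < topSwap k u ∧ i < topSwap k v) ↔ ¬(v < u ∧ i < v) := by
  rw [Ne, Fin.ext_iff] at huv
  simp only [Fin.lt_def, topSwap_val]
  split_ifs <;> omega

lemma neg_one_pow_card_invisibleInversions_topSwap_mul {σ : Perm (Fin (k + 2))}
    (hσ : σ ∉ (blockSum k).range) :
    (-1 : ℤ) ^ #(invisibleInversions (topSwap k * σ)) = -(-1) ^ #(invisibleInversions σ) := by
  obtain ⟨x, hx, hσx⟩ : ∃ x : Fin (k + 2), (x : ℕ) < k ∧ k ≤ (σ x : ℕ) := by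
    by_contra! h
    exact hσ (mem_range_blockSum h)
  obtain ⟨y, hσy⟩ : ∃ y, σ y = topSwap k (σ x) := ⟨σ.symm _, σ.apply_symm_apply _⟩
  have hσy_top : k ≤ (σ y : ℕ) := by rw [hσy, topSwap_val]; split_ifs <;> omega
  have hxy : x ≠ y := by
    rintro rfl
    rw [Fin.ext_iff, topSwap_val] at hσy
    split_ifs at hσy <;> omega
  have eq_or_eq_of_le_val : ∀ z, k ≤ (σ z : ℕ) → z = x ∨ z = y := by
    intro z hz
    have : σ z = σ x ∨ σ z = σ y := by
      simp only [Fin.ext_iff, hσy, topSwap_val]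
      split_ifs <;> omega
    exact this.imp (fun h => σ.injective h) (fun h => σ.injective h)
  -- Positions `x` and `y` carry the values `k` and `k + 1`; only the pair they form changes status,
  -- and it does change because its left entry `min x y ≤ x` is `< k`.
  apply neg_one_pow_card_filter_eq_neg_of_toggle (min x y, max x y)
  · have hlt : min x y < max x y := min_lt_max.mpr hxy
    have hmin : k ≤ (σ (min x y) : ℕ) := by
      rcases min_choice x y with h | h <;> rw [h] <;> assumption
    have hmax : k ≤ (σ (max x y) : ℕ) := by
      rcases max_choice x y with h | h <;> rw [h] <;> assumption
    simp only [Perm.mul_apply, hlt, true_and]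
    exact topSwap_lt_and_lt_topSwap_iff_not ((Fin.le_def.mp (min_le_left x y)).trans_lt hx)
      hmin hmax (σ.injective.ne hlt.ne)
  · rintro ⟨i, j⟩ hij
    simp only [Perm.mul_apply]
    refine and_congr_right fun hlt => topSwap_lt_and_lt_topSwap_iff ?_
    rintro ⟨hi, hj⟩
    apply hij
    rcases eq_or_eq_of_le_val i hi with rfl | rfl <;> rcases eq_or_eq_of_le_val j hj with rfl | rfl
    · exact absurd hlt (lt_irrefl _)
    · simp [min_eq_left hlt.le, max_eq_right hlt.le]
    · simp [min_eq_right hlt.le, max_eq_left hlt.le]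
    · exact absurd hlt (lt_irrefl _)

lemma invisibleInversions_blockSum (x : Perm (Fin k) × Perm (Fin 2)) :
    invisibleInversions (blockSum k x) =
      (invisibleInversions x.1).map ((Fin.castAddEmb 2).prodMap (Fin.castAddEmb 2)) := by
  have hne (a : Fin k) (b : Fin 2) : Fin.castAdd 2 a ≠ Fin.natAdd k b := by
    rw [Ne, Fin.ext_iff, Fin.val_castAdd, Fin.val_natAdd]; omega
  ext ⟨i, j⟩
  induction i using Fin.addCases <;> induction j using Fin.addCases <;>
    simp [invisibleInversions, hne] <;>
    simp only [Fin.lt_def, Fin.val_castAdd, Fin.val_natAdd] <;> omega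

lemma sum_filter_mem_range_blockSum :
    ∑ σ ∈ univ.filter (· ∈ (blockSum k).range), (-1 : ℤ) ^ #(invisibleInversions σ) =
      2 * signedCount k := by
  have : univ.filter (· ∈ (blockSum k).range) = univ.image (blockSum k) := by
    ext; simp [MonoidHom.mem_range]
  rw [this, sum_image blockSum_injective.injOn, Fintype.sum_prod_type]
  simp [invisibleInversions_blockSum, signedCount, mul_sum, Fintype.card_perm]

lemma sum_filter_not_mem_range_blockSum :
    ∑ σ ∈ univ.filter (· ∉ (blockSum k).range), (-1 : ℤ) ^ #(invisibleInversions σ) = 0 := by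
  refine sum_involution (fun σ _ => topSwap k * σ) (fun σ hσ => ?_) (fun σ _ _ => ?_)
    (fun σ hσ => ?_) (fun σ _ => swap_mul_self_mul _ _ σ)
  · rw [neg_one_pow_card_invisibleInversions_topSwap_mul (mem_filter.mp hσ).2, add_neg_cancel]
  · rw [Ne, mul_eq_right, topSwap, swap_eq_one_iff, Fin.ext_iff]
    simp
  · rw [mem_filter, Subgroup.mul_mem_cancel_left _ topSwap_mem_range_blockSum]
    exact ⟨mem_univ _, (mem_filter.mp hσ).2⟩

lemma signedCount_add_two : signedCount (k + 2) = 2 * signedCount k := by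
  rw [signedCount, ← sum_filter_add_sum_filter_not univ (· ∈ (blockSum k).range),
    sum_filter_mem_range_blockSum, sum_filter_not_mem_range_blockSum, add_zero]

lemma signedCount_eq (n : ℕ) : signedCount n = 2 ^ (n / 2) := by
  induction n using Nat.twoStepInduction with
  | zero => decide
  | one => decide
  | more k ih _ => rw [signedCount_add_two, ih, Nat.add_div_right k two_pos, pow_succ, mul_comm]

end InvisibleInversions

open InvisibleInversions in
theorem invisible_inversions_q_eq_neg_one_general (n : ℕ) :
    ∑ σ : Equiv.Perm (Fin n),
      (-1 : ℤ) ^ (univ.filter (fun p : Fin n × Fin n =>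
        p.1 < p.2 ∧ σ p.2 < σ p.1 ∧ p.1 < σ p.2)).card
      = 2 ^ (n / 2) :=
  signedCount_eq n

/-- The generating function of the number of invisible inversions on `S_n`
evaluated at `q = -1` equals `2^⌊n/2⌋`. An invisible inversion is a pair
`(i,j)` with `i < j` and `σ i > σ j > i`. -/
theorem invisible_inversions_q_eq_neg_one (n : ℕ) (hn : 0 < n) :
    ∑ σ : Equiv.Perm (Fin n),
      (-1 : ℤ) ^ (univ.filter (fun p : Fin n × Fin n =>
        p.1 < p.2 ∧ σ p.2 < σ p.1 ∧ p.1 < σ p.2)).card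
      = 2 ^ (n / 2) :=
  invisible_inversions_q_eq_neg_one_general n
end

section
/- For every integer n ≥ 2, the sum over all permutations σ of [n] of (-1) raised to the number of inversions of σ of distance at most 2 equals 0. Equivalently, the number of permutations of [n] with an even number of such inversions equals the number with an odd number. (Hence this statistic exhibits the cyclic sieving phenomenon with respect to fixed-point-free involutions on S_n.) -/
/-!
Replacing `σ` by `rev ∘ σ`, where `rev k = n - 1 - k` reverses the values, turns each of the
`2n - 3` pairs of positions at distance at most `2` from an inversion into a non-inversion or
back, so `inv₂ (rev ∘ σ) = 2n - 3 - inv₂ σ`. As `2n - 3` is odd, this involution of `S_n`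
reverses the sign `(-1) ^ inv₂`, and the signed sum vanishes.
-/

open Finset Equiv

lemma neg_one_pow_eq_neg_neg_one_pow_of_odd_add {R : Type*} [Monoid R] [HasDistribNeg R]
    {a b : ℕ} (h : Odd (a + b)) : (-1 : R) ^ a = -(-1) ^ b := by
  have hb : (-1 : R) ^ b * (-1) ^ b = 1 := by rw [← pow_add, Even.neg_one_pow ⟨b, rfl⟩]
  calc (-1 : R) ^ a = (-1) ^ (a + b) * (-1) ^ b := by rw [pow_add, mul_assoc, hb, mul_one]
    _ = -(-1) ^ b := by rw [h.neg_one_pow, neg_one_mul]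

section

variable {n : ℕ}

def closePairs (n : ℕ) : Finset (Fin n × Fin n) :=
  univ.filter fun p => p.1 < p.2 ∧ (p.2 : ℕ) ≤ p.1 + 2

def inversionsOn (S : Finset (Fin n × Fin n)) (σ : Perm (Fin n)) : Finset (Fin n × Fin n) :=
  S.filter fun p => σ p.2 < σ p.1

/-- `(i, j) ↦ 2i + (j - i - 1)` enumerates the close pairs as `0, 1, …, 2n - 4`. -/
theorem card_closePairs (hn : 2 ≤ n) : #(closePairs n) = 2 * n - 3 := by
  rw [← card_range (2 * n - 3)]
  refine card_bij' (fun p _ => 2 * (p.1 : ℕ) + ((p.2 : ℕ) - p.1 - 1))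
    (fun k hk => (⟨k / 2, by rw [mem_range] at hk; omega⟩,
      ⟨k / 2 + 1 + k % 2, by rw [mem_range] at hk; omega⟩)) ?_ ?_ ?_ ?_
  · intro p hp
    simp only [closePairs, mem_filter, mem_univ, true_and, Fin.lt_def] at hp
    have := p.2.isLt
    rw [mem_range]
    omega
  · intro k hk
    rw [mem_range] at hk
    simp only [closePairs, mem_filter, mem_univ, true_and, Fin.mk_lt_mk]
    omega
  · intro p hp
    simp only [closePairs, mem_filter, mem_univ, true_and, Fin.lt_def] at hp
    ext <;> simp only <;> omega
  · intro k _
    dsimp only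
    omega

theorem card_inversionsOn_revPerm_mul_add (S : Finset (Fin n × Fin n))
    (hS : ∀ p ∈ S, p.1 ≠ p.2) (σ : Perm (Fin n)) :
    #(inversionsOn S (Fin.revPerm * σ)) + #(inversionsOn S σ) = #S := by
  have hcompl : inversionsOn S (Fin.revPerm * σ) = S.filter fun p => ¬ σ p.2 < σ p.1 := by
    refine filter_congr fun p hp => ?_
    have hne : σ p.1 ≠ σ p.2 := σ.injective.ne (hS p hp)
    simp only [Perm.mul_apply, Fin.revPerm_apply, Fin.rev_lt_rev, not_lt]
    exact ⟨le_of_lt, fun h => lt_of_le_of_ne h hne⟩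
  rw [hcompl, inversionsOn, add_comm]
  exact card_filter_add_card_filter_not _

theorem neg_one_pow_card_inversionsOn_closePairs_revPerm_mul (hn : 2 ≤ n) (σ : Perm (Fin n)) :
    (-1 : ℤ) ^ #(inversionsOn (closePairs n) (Fin.revPerm * σ))
      = -(-1) ^ #(inversionsOn (closePairs n) σ) := by
  apply neg_one_pow_eq_neg_neg_one_pow_of_odd_add
  rw [card_inversionsOn_revPerm_mul_add _ (fun p hp => (mem_filter.1 hp).2.1.ne),
    card_closePairs hn]
  exact ⟨n - 2, by omega⟩

end

/-- For `n ≥ 2`, the sum over `S_n` of `(-1)` raised to the number of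
inversions of distance at most 2 equals `0`. -/
theorem inversions_distance_two_q_eq_neg_one (n : ℕ) (hn : 2 ≤ n) :
    ∑ σ : Equiv.Perm (Fin n),
      (-1 : ℤ) ^ (univ.filter (fun p : Fin n × Fin n =>
        p.1 < p.2 ∧ (p.2 : ℕ) ≤ (p.1 : ℕ) + 2 ∧ σ p.2 < σ p.1)).card
      = 0 := by
  have hinv : ∀ σ : Perm (Fin n), univ.filter (fun p : Fin n × Fin n =>
      p.1 < p.2 ∧ (p.2 : ℕ) ≤ (p.1 : ℕ) + 2 ∧ σ p.2 < σ p.1) = inversionsOn (closePairs n) σ :=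
    fun σ => by simp only [inversionsOn, closePairs, filter_filter, and_assoc]
  simp only [hinv]
  refine self_eq_neg.mp ?_
  calc _ = ∑ σ : Perm (Fin n), (-1 : ℤ) ^ #(inversionsOn (closePairs n) (Fin.revPerm * σ)) :=
        (Equiv.sum_comp (Equiv.mulLeft Fin.revPerm) _).symm
    _ = _ := by
        simp only [neg_one_pow_card_inversionsOn_closePairs_revPerm_mul hn, sum_neg_distrib]
end

section
/- Let k and n be integers with 1 ≤ k < n such that n and k have opposite parity (i.e., n − k is odd). Then the sum over all permutations σ of [n] of (-1) raised to the number of width-k descents of σ equals 0. Equivalently, the number of permutations of [n] with an even number of width-k descents equals the number with an odd number. (Hence the number of width-k descents exhibits the cyclic sieving phenomenon with respect to fixed-point-free involutions on S_n when n and k have opposite parity.) -/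
open Finset

/-- If `1 ≤ k < n` and `n - k` is odd, the sum over `S_n` of `(-1)` raised to
the number of width-`k` descents equals `0`. A width-`k` descent is an index
`i` with `σ i > σ (i+k)`. -/
theorem width_k_descents_q_eq_neg_one (n k : ℕ) (hk : 1 ≤ k) (hkn : k < n)
    (hpar : Odd (n - k)) :
    ∑ σ : Equiv.Perm (Fin n),
      (-1 : ℤ) ^ (univ.filter (fun i : Fin n =>
        ∃ j : Fin n, (j : ℕ) = (i : ℕ) + k ∧ σ j < σ i)).card
      = 0 := by
  set D : Equiv.Perm (Fin n) → Finset (Fin n) := fun σ =>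
    univ.filter (fun i : Fin n => ∃ j : Fin n, (j : ℕ) = (i : ℕ) + k ∧ σ j < σ i) with hD
  set V : Finset (Fin n) := univ.filter (fun i : Fin n => (i : ℕ) + k < n) with hV
  have hVcard : V.card = n - k := by
    have : V = (Finset.range (n - k)).attachFin (fun m hm => by
        exact lt_of_lt_of_le (Finset.mem_range.mp hm) (Nat.sub_le n k)) := by
      ext i
      simp [hV, Finset.mem_attachFin, Nat.lt_sub_iff_add_lt]
    rw [this, Finset.card_attachFin, Finset.card_range]
  have hsub : ∀ σ, D σ ⊆ V := by
    intro σ i hi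
    simp only [hD, mem_filter, mem_univ, true_and] at hi
    obtain ⟨j, hj, -⟩ := hi
    simp only [hV, mem_filter, mem_univ, true_and]
    exact hj ▸ j.isLt
  have hmem : ∀ (σ : Equiv.Perm (Fin n)) (i : Fin n) (hi : (i : ℕ) + k < n),
      (i ∈ D σ ↔ σ ⟨(i : ℕ) + k, hi⟩ < σ i) := by
    intro σ i hi
    simp only [hD, mem_filter, mem_univ, true_and]
    constructor
    · rintro ⟨j, hj1, hj2⟩
      have : j = ⟨(i : ℕ) + k, hi⟩ := Fin.ext hj1
      rwa [this] at hj2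
    · intro h
      exact ⟨⟨(i : ℕ) + k, hi⟩, rfl, h⟩
  have hcompl : ∀ σ : Equiv.Perm (Fin n),
      D (Fin.revPerm * σ) = V \ D σ := by
    intro σ
    ext i
    simp only [mem_sdiff]
    constructor
    · intro h
      have hiV := hsub _ h
      refine ⟨hiV, ?_⟩
      have hi : (i : ℕ) + k < n := by
        simpa only [hV, mem_filter, mem_univ, true_and] using hiV
      rw [hmem _ _ hi] at h ⊢
      simp only [Equiv.Perm.mul_apply, Fin.revPerm_apply, Fin.rev_lt_rev] at h
      exact fun h' => lt_asymm h h'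
    · rintro ⟨hiV, hnd⟩
      have hi : (i : ℕ) + k < n := by
        simpa only [hV, mem_filter, mem_univ, true_and] using hiV
      rw [hmem _ _ hi] at hnd ⊢
      simp only [Equiv.Perm.mul_apply, Fin.revPerm_apply, Fin.rev_lt_rev]
      have hne : σ ⟨(i : ℕ) + k, hi⟩ ≠ σ i := by
        intro h
        have := σ.injective h
        have : (i : ℕ) + k = (i : ℕ) := congrArg Fin.val this
        omega
      rcases lt_or_gt_of_ne hne with h | h
      · exact absurd h hnd
      · exact h
  have key : ∀ σ : Equiv.Perm (Fin n),
      ((-1 : ℤ)) ^ (D (Fin.revPerm * σ)).card = - (-1 : ℤ) ^ (D σ).card := by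
    intro σ
    have h2 : (D σ).card ≤ n - k := hVcard ▸ card_le_card (hsub σ)
    have h1 : (D (Fin.revPerm * σ)).card = (n - k) - (D σ).card := by
      rw [hcompl, card_sdiff_of_subset (hsub σ), hVcard]
    rw [h1]
    rcases Nat.even_or_odd (D σ).card with h | h
    · rw [(Nat.Odd.sub_even h2 hpar h).neg_one_pow, h.neg_one_pow]
    · rw [(Nat.Odd.sub_odd hpar h).neg_one_pow, h.neg_one_pow]
      ring
  have hsum : ∑ σ : Equiv.Perm (Fin n), (-1 : ℤ) ^ (D σ).card
      = - ∑ σ : Equiv.Perm (Fin n), (-1 : ℤ) ^ (D σ).card := by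
    conv_lhs => rw [← Equiv.sum_comp (Equiv.mulLeft (Fin.revPerm : Equiv.Perm (Fin n)))
      (fun σ => (-1 : ℤ) ^ (D σ).card)]
    simp only [Equiv.coe_mulLeft]
    rw [← Finset.sum_neg_distrib]
    exact Finset.sum_congr rfl fun σ _ => key σ
  linarith
end

section
/- For every integer n ≥ 4, the sum over all permutations σ of [n] of (-1) raised to the number of times σ switches from increasing to decreasing or from decreasing to increasing equals 0. Equivalently, the number of permutations of [n] with an even number of such switches equals the number with an odd number. (Hence this statistic exhibits the cyclic sieving phenomenon with respect to fixed-point-free involutions on S_n.) -/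
/-!
Swapping the first two entries (right multiplication by the transposition `(0 1)`) reverses the
sign `(-1)^(number of turns)` once `n ≥ 4`, so the sum cancels in pairs. Only the turns at
positions `1` and `2` can change. For distinct values, a turn at the middle of `x, y, z` has
sign `s(x, y) * s(y, z)`, where `s(x, y) = ±1` records whether `x < y`; so if the first four
entries are `w, x, y, z`, the two local signs multiply to `s(w, x) * s(y, z)` before the swap
and to `s(x, w) * s(y, z)` after it, and `s(x, w) = -s(w, x)`.
-/

open Finset

theorem Fintype.sum_eq_zero_of_mul_right_eq_neg {G M : Type*} [Group G] [Fintype G]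
    [AddCommGroup M] [IsAddTorsionFree M] {F : G → M} (τ : G)
    (hF : ∀ σ, F (σ * τ) = -F σ) :
    ∑ σ, F σ = 0 :=
  self_eq_neg.mp <| calc
    ∑ σ, F σ = ∑ σ, F (σ * τ) := (Equiv.sum_comp (Equiv.mulRight τ) F).symm
    _ = -∑ σ, F σ := by simp only [hF, Finset.sum_neg_distrib]

theorem Fin.swap_zero_one_apply_of_two_le {n : ℕ} {j : Fin (n + 2)} (hj : 2 ≤ (j : ℕ)) :
    Equiv.swap 0 1 j = j :=
  Equiv.swap_apply_of_ne_of_ne (Fin.ne_of_val_ne (by rw [Fin.val_zero]; omega))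
    (Fin.ne_of_val_ne (by rw [Fin.val_one]; omega))

section TurningPoint

variable {α : Type*} [LinearOrder α]

def IsTurningPoint (x y z : α) : Prop :=
  (x < y ∧ z < y) ∨ (y < x ∧ y < z)

instance (x y z : α) : Decidable (IsTurningPoint x y z) :=
  inferInstanceAs (Decidable (_ ∨ _))

def ascentSign (x y : α) : ℤ :=
  if x < y then 1 else -1

theorem ascentSign_swap {x y : α} (h : x ≠ y) : ascentSign y x = -ascentSign x y := by
  rcases h.lt_or_gt with h | h <;> simp [ascentSign, h, h.not_gt]

theorem ascentSign_sq (x y : α) : ascentSign x y ^ 2 = 1 := by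
  unfold ascentSign; split_ifs <;> norm_num

def turningSign (x y z : α) : ℤ :=
  if IsTurningPoint x y z then -1 else 1

theorem turningSign_eq_ascentSign_mul {x y z : α} (hxy : x ≠ y) (hyz : y ≠ z) :
    turningSign x y z = ascentSign x y * ascentSign y z := by
  rcases hxy.lt_or_gt with hxy | hxy <;> rcases hyz.lt_or_gt with hyz | hyz <;>
    simp [turningSign, IsTurningPoint, ascentSign, hxy, hyz, hxy.not_gt, hyz.not_gt]

theorem turningSign_swap_mul {w x y z : α} (hwx : w ≠ x) (hwy : w ≠ y) (hxy : x ≠ y)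
    (hyz : y ≠ z) :
    turningSign x w y * turningSign w x y * (turningSign w y z * turningSign x y z) = -1 := by
  rw [turningSign_eq_ascentSign_mul hwx.symm hwy, turningSign_eq_ascentSign_mul hwx hxy,
    turningSign_eq_ascentSign_mul hwy hyz, turningSign_eq_ascentSign_mul hxy hyz,
    ascentSign_swap hwx]
  calc _ = -(ascentSign w x ^ 2 * ascentSign x y ^ 2 * ascentSign w y ^ 2 *
          ascentSign y z ^ 2) := by ring
    _ = -1 := by simp only [ascentSign_sq]; norm_num

end TurningPoint

section Turn

variable {α : Type*} [LinearOrder α] {n : ℕ}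

def IsTurn (f : Fin n → α) (i : Fin n) : Prop :=
  ∃ a b : Fin n, (a : ℕ) + 1 = i ∧ (i : ℕ) + 1 = b ∧ IsTurningPoint (f a) (f i) (f b)

instance (f : Fin n → α) (i : Fin n) : Decidable (IsTurn f i) := by
  unfold IsTurn; infer_instance

theorem isTurn_iff {f : Fin n → α} {a i b : Fin n} (ha : (a : ℕ) + 1 = i)
    (hb : (i : ℕ) + 1 = b) : IsTurn f i ↔ IsTurningPoint (f a) (f i) (f b) := by
  refine ⟨?_, fun h => ⟨a, b, ha, hb, h⟩⟩
  rintro ⟨a', b', ha', hb', h⟩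
  obtain rfl : a' = a := Fin.ext (by omega)
  obtain rfl : b' = b := Fin.ext (by omega)
  exact h

theorem isTurn_congr {f g : Fin n → α} {i : Fin n}
    (h : ∀ a b : Fin n, (a : ℕ) + 1 = i → (i : ℕ) + 1 = b →
      f a = g a ∧ f i = g i ∧ f b = g b) :
    IsTurn f i ↔ IsTurn g i := by
  refine exists₂_congr fun a b => and_congr_right fun ha => and_congr_right fun hb => ?_
  obtain ⟨hfa, hfi, hfb⟩ := h a b ha hb
  rw [hfa, hfi, hfb]

theorem isTurn_comp_swap_iff {f : Fin (n + 3) → α} {i : Fin (n + 3)} (h1 : i ≠ 1)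
    (h2 : i ≠ 2) : IsTurn (f ∘ Equiv.swap 0 1) i ↔ IsTurn f i := by
  have v1 : ((1 : Fin (n + 3)) : ℕ) = 1 := by simp
  have v2 : ((2 : Fin (n + 3)) : ℕ) = 2 := by simp
  have h1 : (i : ℕ) ≠ 1 := fun h => h1 (Fin.ext (by omega))
  have h2 : (i : ℕ) ≠ 2 := fun h => h2 (Fin.ext (by omega))
  have hfix : ∀ j : Fin (n + 3), 2 ≤ (j : ℕ) → (f ∘ Equiv.swap 0 1) j = f j := fun j hj =>
    congrArg f (Fin.swap_zero_one_apply_of_two_le hj)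
  exact isTurn_congr fun a b ha hb =>
    ⟨hfix a (by omega), hfix i (by omega), hfix b (by omega)⟩

theorem neg_one_pow_card_isTurn_comp_swap_mul {f : Fin (n + 4) → α}
    (hf : Function.Injective f) :
    (-1 : ℤ) ^ #{i | IsTurn (f ∘ Equiv.swap 0 1) i} * (-1) ^ #{i | IsTurn f i} = -1 := by
  have v0 : ((0 : Fin (n + 4)) : ℕ) = 0 := rfl
  have v1 : ((1 : Fin (n + 4)) : ℕ) = 1 := by simp
  have v2 : ((2 : Fin (n + 4)) : ℕ) = 2 := by simp
  have v3 : ((3 : Fin (n + 4)) : ℕ) = 3 := by simp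
  have hf' : ∀ j k : Fin (n + 4), (j : ℕ) ≠ k → f j ≠ f k := fun j k h =>
    hf.ne (Fin.ne_of_val_ne h)
  simp only [← prod_const, prod_filter, ← prod_mul_distrib]
  rw [Fintype.prod_eq_mul 1 2 (Fin.ne_of_val_ne (by omega)) fun i hi => by
    simp only [isTurn_comp_swap_iff hi.1 hi.2]; split_ifs <;> rfl]
  simp only [isTurn_iff (a := 0) (i := 1) (b := 2) (by omega) (by omega),
    isTurn_iff (a := 1) (i := 2) (b := 3) (by omega) (by omega), Function.comp_apply,
    Equiv.swap_apply_left, Equiv.swap_apply_right,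
    Fin.swap_zero_one_apply_of_two_le (j := 2) (by omega),
    Fin.swap_zero_one_apply_of_two_le (j := 3) (by omega)]
  exact turningSign_swap_mul (hf' 0 1 (by omega)) (hf' 0 2 (by omega))
    (hf' 1 2 (by omega)) (hf' 2 3 (by omega))

theorem neg_one_pow_card_isTurn_comp_swap {f : Fin (n + 4) → α} (hf : Function.Injective f) :
    (-1 : ℤ) ^ #{i | IsTurn (f ∘ Equiv.swap 0 1) i} = -(-1) ^ #{i | IsTurn f i} := by
  rcases Int.eq_one_or_neg_one_of_mul_eq_neg_one' (neg_one_pow_card_isTurn_comp_swap_mul hf)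
    with ⟨h₁, h₂⟩ | ⟨h₁, h₂⟩ <;> simp [h₁, h₂]

end Turn

/-- For `n ≥ 4`, the sum over `S_n` of `(-1)` raised to the number of interior
local extrema (switches between increasing and decreasing) equals `0`. -/
theorem switches_q_eq_neg_one (n : ℕ) (hn : 4 ≤ n) :
    ∑ σ : Equiv.Perm (Fin n),
      (-1 : ℤ) ^ (univ.filter (fun i : Fin n =>
        ∃ a b : Fin n, (a : ℕ) + 1 = (i : ℕ) ∧ (i : ℕ) + 1 = (b : ℕ) ∧
          ((σ a < σ i ∧ σ b < σ i) ∨ (σ i < σ a ∧ σ i < σ b)))).card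
      = 0 := by
  obtain ⟨m, rfl⟩ := Nat.exists_eq_add_of_le' hn
  exact Fintype.sum_eq_zero_of_mul_right_eq_neg (Equiv.swap 0 1) fun σ =>
    neg_one_pow_card_isTurn_comp_swap σ.injective
end

section
/- For every integer n ≥ 3, the sum over all permutations σ of [n] of (-1) raised to the number of even inversions of σ equals 0. Equivalently, the number of permutations of [n] with an even number of even inversions equals the number with an odd number. (Hence the number of even inversions exhibits the cyclic sieving phenomenon with respect to fixed-point-free involutions on S_n.) -/
open Finset

/-- For `n ≥ 3`, the sum over `S_n` of `(-1)` raised to the number of even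
inversions (inversions `(i,j)` with `i ≡ j (mod 2)`) equals `0`. -/
theorem even_inversions_q_eq_neg_one (n : ℕ) (hn : 3 ≤ n) :
    ∑ σ : Equiv.Perm (Fin n),
      (-1 : ℤ) ^ (univ.filter (fun p : Fin n × Fin n =>
        p.1 < p.2 ∧ (p.1 : ℕ) % 2 = (p.2 : ℕ) % 2 ∧ σ p.2 < σ p.1)).card
      = 0 := by
  classical
  have h0 : 0 < n := by omega
  have h2 : 2 < n := by omega
  set i0 : Fin n := ⟨0, h0⟩
  set i2 : Fin n := ⟨2, h2⟩
  have v0 : (i0 : ℕ) = 0 := rfl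
  have v2 : (i2 : ℕ) = 2 := rfl
  set s : Equiv.Perm (Fin n) := Equiv.swap i0 i2 with hs
  set A : Equiv.Perm (Fin n) → Finset (Fin n × Fin n) := fun σ =>
    univ.filter (fun p : Fin n × Fin n =>
      p.1 < p.2 ∧ (p.1 : ℕ) % 2 = (p.2 : ℕ) % 2 ∧ σ p.2 < σ p.1) with hA
  -- parity of values is preserved by s
  have hpar : ∀ i : Fin n, ((s i : Fin n) : ℕ) % 2 = (i : ℕ) % 2 := by
    intro i
    rw [hs, Equiv.swap_apply_def]
    split_ifs with hc1 hc2
    · rw [hc1, v0, v2]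
    · rw [hc2, v0, v2]
    · rfl
  -- s preserves order of same-parity pairs other than (i0, i2)
  have hlt : ∀ i j : Fin n, i < j → (i : ℕ) % 2 = (j : ℕ) % 2 →
      ¬(i = i0 ∧ j = i2) → s i < s j := by
    intro i j hij hpp hne
    have fij : (i : ℕ) < (j : ℕ) := hij
    rw [hs, Fin.lt_def, Equiv.swap_apply_def, Equiv.swap_apply_def]
    simp only [apply_ite Fin.val, Fin.ext_iff, v0, v2]
    simp only [Fin.ext_iff, v0, v2] at hne
    split_ifs <;> omega
  set P : Fin n × Fin n := (i0, i2) with hP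
  have hss : ∀ x : Fin n, s (s x) = x := fun x => Equiv.swap_apply_self _ _ x
  have horder : i0 < i2 := by rw [Fin.lt_def, v0, v2]; omega
  have hparP : (i0 : ℕ) % 2 = (i2 : ℕ) % 2 := by rw [v0, v2]
  have hne02 : i0 ≠ i2 := by
    intro h; have := congrArg Fin.val h; rw [v0, v2] at this; omega
  -- the key parity flip
  have key : ∀ σ : Equiv.Perm (Fin n),
      (-1 : ℤ) ^ (A (σ * s)).card = -(-1 : ℤ) ^ (A σ).card := by
    intro σ
    have hmem : ∀ τ : Equiv.Perm (Fin n), ∀ p : Fin n × Fin n,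
        p ∈ (A (τ * s)).erase P → (s p.1, s p.2) ∈ (A τ).erase P := by
      intro τ p hp
      simp only [hA, Finset.mem_erase, Finset.mem_filter, Finset.mem_univ,
        true_and] at hp ⊢
      obtain ⟨hpP, h1, h2', h3⟩ := hp
      refine ⟨?_, ?_, ?_, ?_⟩
      · intro hcon
        rw [hP, Prod.ext_iff] at hcon
        have e1 : p.1 = i2 := by
          have := congrArg s hcon.1; rwa [hss, hs, Equiv.swap_apply_left] at this
        have e2 : p.2 = i0 := by
          have := congrArg s hcon.2; rwa [hss, hs, Equiv.swap_apply_right] at this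
        rw [e1, e2] at h1
        have := (Fin.lt_def).mp h1
        rw [v0, v2] at this; omega
      · exact hlt p.1 p.2 h1 h2' (by
          intro ⟨e1, e2⟩
          exact hpP (by rw [hP, Prod.ext_iff]; exact ⟨e1, e2⟩))
      · rw [hpar, hpar]; exact h2'
      · simpa [Equiv.Perm.mul_apply] using h3
    have hcard : ((A (σ * s)).erase P).card = ((A σ).erase P).card := by
      refine Finset.card_bij' (fun p _ => (s p.1, s p.2)) (fun p _ => (s p.1, s p.2))
        (hmem σ) ?_ ?_ ?_
      · intro p hp
        have hp' : p ∈ (A (σ * s * s)).erase P := by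
          rwa [mul_assoc, hs, Equiv.swap_mul_self, mul_one]
        exact hmem (σ * s) p hp'
      · intro p _; simp [hss]
      · intro p _; simp [hss]
    have hv1 : (σ * s) i0 = σ i2 := by
      rw [Equiv.Perm.mul_apply, hs, Equiv.swap_apply_left]
    have hv2 : (σ * s) i2 = σ i0 := by
      rw [Equiv.Perm.mul_apply, hs, Equiv.swap_apply_right]
    have hneq : σ i0 ≠ σ i2 := fun h => hne02 (σ.injective h)
    have hmemP : ∀ τ : Equiv.Perm (Fin n), P ∈ A τ ↔ τ i2 < τ i0 := by
      intro τ
      simp [hA, hP, Finset.mem_filter, horder, hparP]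
    have hPmem : P ∈ A (σ * s) ↔ P ∉ A σ := by
      rw [hmemP, hmemP, hv1, hv2]
      constructor
      · intro h h'; exact absurd (lt_trans h h') (lt_irrefl _)
      · intro h; exact lt_of_le_of_ne (not_lt.mp h) hneq
    by_cases hPA : P ∈ A σ
    · have hPA' : P ∉ A (σ * s) := fun h => (hPmem.mp h) hPA
      have e1 : (A (σ * s)).erase P = A (σ * s) := Finset.erase_eq_of_notMem hPA'
      have e2 : ((A σ).erase P).card = (A σ).card - 1 := Finset.card_erase_of_mem hPA
      have hpos : 1 ≤ (A σ).card := Finset.card_pos.mpr ⟨P, hPA⟩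
      have h3 : (A (σ * s)).card = (A σ).card - 1 := by rw [← e1, hcard, e2]
      have h4 : (A σ).card = (A (σ * s)).card + 1 := by omega
      rw [h4, pow_succ]; ring
    · have hPA' : P ∈ A (σ * s) := hPmem.mpr hPA
      have e1 : (A σ).erase P = A σ := Finset.erase_eq_of_notMem hPA
      have e2 : ((A (σ * s)).erase P).card = (A (σ * s)).card - 1 :=
        Finset.card_erase_of_mem hPA'
      have hpos : 1 ≤ (A (σ * s)).card := Finset.card_pos.mpr ⟨P, hPA'⟩
      have h3 : (A (σ * s)).card - 1 = (A σ).card := by rw [← e2, hcard, e1]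
      have h4 : (A (σ * s)).card = (A σ).card + 1 := by omega
      rw [h4, pow_succ]; ring
  -- apply the sign-reversing involution σ ↦ σ * s
  refine Finset.sum_involution (fun σ _ => σ * s) ?_ ?_ (fun σ _ => Finset.mem_univ _) ?_
  · intro σ _
    show (-1 : ℤ) ^ (A σ).card + (-1 : ℤ) ^ (A (σ * s)).card = 0
    rw [key σ]; ring
  · intro σ _ _ hcon
    have hcon' : σ * s = σ := hcon
    have h1 : σ (s i0) = σ i0 := by rw [← Equiv.Perm.mul_apply, hcon']
    have h2' : s i0 = i0 := σ.injective h1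
    rw [hs, Equiv.swap_apply_left] at h2'
    exact hne02 h2'.symm
  · intro σ _
    show σ * s * s = σ
    rw [mul_assoc, hs, Equiv.swap_mul_self, mul_one]
end

section
/- For every integer n ≥ 2, the sum over all permutations σ of [n] of I^{j(σ)} equals 0, where I is the imaginary unit in the complex numbers and j(σ) = ∑_{1 ≤ y < x ≤ n} (-1)^{y+x} · sign(σ_x − σ_y) is the (possibly negative) bi-alternating inversion number. (This is equivalent to the statement that the standardized bi-alternating inversion number stat(σ) = (j(σ) + ⌊n/2⌋²)/2 satisfies ∑_{σ ∈ S_n} (-1)^{stat(σ)} = 0, i.e., it exhibits the cyclic sieving phenomenon with respect to fixed-point-free involutions on S_n.) -/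
/-!
If `a ⋖ b` are adjacent values, composing `σ` with the transposition `(a b)` of values reverses
the relative order of exactly one pair of positions, namely the positions of `a` and `b`. So it
changes an inversion statistic with odd weights by twice an odd number, `I ^ j` changes sign, and
`σ ↦ (a b) * σ` is a sign-reversing involution of the sum.
-/

open Finset Equiv

section WeightedInversions

variable {α : Type*} [LinearOrder α]

theorem swap_apply_lt_swap_apply_iff_of_covBy {a b x y : α} (hab : a ⋖ b) (hxy : x ≠ y)
    (h₁ : ¬(x = a ∧ y = b)) (h₂ : ¬(x = b ∧ y = a)) :
    swap a b x < swap a b y ↔ x < y := by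
  have ha : ∀ z, a < z ↔ b ≤ z := fun z => hab.le_iff_lt_right.symm
  have hb : ∀ z, z < b ↔ z ≤ a := fun z => hab.le_iff_lt_left.symm
  rw [swap_apply_def, swap_apply_def]
  split_ifs <;> grind

def inversionTerm (w : α × α → ℤ) (σ : Perm α) (p : α × α) : ℤ :=
  w p * if σ p.1 < σ p.2 then 1 else -1

theorem odd_inversionTerm {w : α × α → ℤ} {p : α × α} (hw : Odd (w p)) (σ : Perm α) :
    Odd (inversionTerm w σ p) := by
  unfold inversionTerm
  split_ifs <;> simpa

theorem inversionTerm_swap_mul_of_covBy {a b : α} (hab : a ⋖ b) (w : α × α → ℤ) (σ : Perm α)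
    {p : α × α} (hp : p.1 ≠ p.2) (h₁ : ¬(σ p.1 = a ∧ σ p.2 = b))
    (h₂ : ¬(σ p.1 = b ∧ σ p.2 = a)) :
    inversionTerm w (swap a b * σ) p = inversionTerm w σ p := by
  simp only [inversionTerm, Perm.mul_apply,
    swap_apply_lt_swap_apply_iff_of_covBy hab (σ.injective.ne hp) h₁ h₂]

theorem inversionTerm_swap_mul_of_swap_apply {a b : α} (w : α × α → ℤ) (σ : Perm α)
    {p : α × α} (hp : p.1 ≠ p.2) (hσp : swap a b (σ p.1) = σ p.2) :
    inversionTerm w (swap a b * σ) p = -inversionTerm w σ p := by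
  have hσp' : swap a b (σ p.2) = σ p.1 := by rw [← hσp, swap_apply_self]
  have hne : σ p.1 ≠ σ p.2 := σ.injective.ne hp
  simp only [inversionTerm, Perm.mul_apply, hσp, hσp']
  rcases hne.lt_or_gt with h | h <;> simp [h, h.not_gt]

variable [Fintype α]

def weightedInversions (w : α × α → ℤ) (σ : Perm α) : ℤ :=
  ∑ p ∈ univ.filter (fun p : α × α => p.1 < p.2), inversionTerm w σ p

theorem weightedInversions_swap_mul_of_covBy {a b : α} (hab : a ⋖ b) (w : α × α → ℤ)
    (σ : Perm α) :
    weightedInversions w (swap a b * σ) = weightedInversions w σ -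
      2 * inversionTerm w σ (min (σ.symm a) (σ.symm b), max (σ.symm a) (σ.symm b)) := by
  set u := σ.symm a
  set v := σ.symm b
  set p₀ := (min u v, max u v)
  have huv : u ≠ v := σ.symm.injective.ne hab.ne
  have hp₀ : p₀ ∈ univ.filter (fun p : α × α => p.1 < p.2) :=
    mem_filter.2 ⟨mem_univ _, min_lt_max.2 huv⟩
  have hσp₀ : swap a b (σ p₀.1) = σ p₀.2 := by
    rcases le_total u v with h | h <;> simp [p₀, u, v, h]
  have hrest : ∀ p ∈ (univ.filter (fun p : α × α => p.1 < p.2)).erase p₀,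
      inversionTerm w (swap a b * σ) p = inversionTerm w σ p := by
    rintro ⟨x, y⟩ hp
    simp only [mem_erase, mem_filter, mem_univ, true_and] at hp
    obtain ⟨hne, hxy⟩ := hp
    refine inversionTerm_swap_mul_of_covBy hab w σ hxy.ne ?_ ?_ <;> rintro ⟨hx, hy⟩ <;>
      apply hne
    · obtain rfl : x = u := σ.eq_symm_apply.2 hx
      obtain rfl : y = v := σ.eq_symm_apply.2 hy
      simp [p₀, hxy.le]
    · obtain rfl : x = v := σ.eq_symm_apply.2 hx
      obtain rfl : y = u := σ.eq_symm_apply.2 hy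
      simp [p₀, hxy.le]
  unfold weightedInversions
  rw [← add_sum_erase _ _ hp₀, ← add_sum_erase _ _ hp₀, sum_congr rfl hrest,
    inversionTerm_swap_mul_of_swap_apply w σ (mem_filter.1 hp₀).2.ne hσp₀]
  ring

end WeightedInversions

theorem Complex.I_zpow_sub_two_mul_of_odd (m : ℤ) {t : ℤ} (ht : Odd t) :
    I ^ (m - 2 * t) = -I ^ m := by
  rw [zpow_sub₀ I_ne_zero, zpow_mul, zpow_two, I_mul_I, ht.neg_one_zpow]
  ring

theorem sum_I_zpow_weightedInversions_eq_zero {α : Type*} [Fintype α] [LinearOrder α] {a b : α}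
    (hab : a ⋖ b) {w : α × α → ℤ} (hw : ∀ p, Odd (w p)) :
    ∑ σ : Perm α, Complex.I ^ weightedInversions w σ = 0 := by
  have hneg : ∀ σ : Perm α, Complex.I ^ weightedInversions w (swap a b * σ) =
      -Complex.I ^ weightedInversions w σ := fun σ => by
    rw [weightedInversions_swap_mul_of_covBy hab,
      Complex.I_zpow_sub_two_mul_of_odd _ (odd_inversionTerm (hw _) σ)]
  have hsum :=
    Equiv.sum_comp (Equiv.mulLeft (swap a b)) (fun σ => Complex.I ^ weightedInversions w σ)
  simp only [coe_mulLeft, hneg, sum_neg_distrib] at hsum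
  linear_combination -hsum / 2

/-- For `n ≥ 2`, the sum over `S_n` of `I^(j σ)` equals `0`, where
`j σ = ∑_{y < x} (-1)^(y+x) · sign (σ x - σ y)` is the bi-alternating
inversion number. -/
theorem bi_alternating_inversion_sum (n : ℕ) (hn : 2 ≤ n) :
    ∑ σ : Equiv.Perm (Fin n),
      Complex.I ^ (∑ p ∈ univ.filter (fun p : Fin n × Fin n => p.1 < p.2),
        ((-1 : ℤ) ^ ((p.1 : ℕ) + (p.2 : ℕ)) *
          (if σ p.1 < σ p.2 then 1 else -1)))
      = 0 :=
  sum_I_zpow_weightedInversions_eq_zero (α := Fin n) (a := ⟨0, by omega⟩) (b := ⟨1, hn⟩)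
    (by simp) (w := fun p => (-1) ^ ((p.1 : ℕ) + (p.2 : ℕ))) fun _ => odd_neg_one.pow
end

section
/- For every odd integer n ≥ 3, the sum over all permutations σ of [n] of (-1) raised to the number of inversions of σ of distance at most 3 equals 0. Equivalently, for odd n, the number of permutations of [n] with an even number of such inversions equals the number with an odd number. (Hence for odd n this statistic exhibits the cyclic sieving phenomenon with respect to fixed-point-free involutions on S_n.) -/
/-!
Precomposing with the reversal `i ↦ n - 1 - i` sends the pair `(i, j)` to `(n-1-j, n-1-i)`, which
preserves the distance `j - i`, and turns inversions into non-inversions and vice versa. So the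
inversions of distance at most 3 of `σ` and of `σ ∘ rev` together fill all `3n - 6` pairs of
distance at most 3 exactly once. For odd `n` that number is odd, so `σ ↦ σ ∘ rev` is a
bijection of `S_n` that flips the sign `(-1)^inv₃(σ)`, and the sum equals its own negative.
-/

open Finset Equiv

namespace Fin

def pairsWithin (n d : ℕ) : Finset (Fin n × Fin n) :=
  univ.filter fun p => p.1 < p.2 ∧ (p.2 : ℕ) ≤ p.1 + d

def inversionsOn {n : ℕ} (D : Finset (Fin n × Fin n)) (σ : Perm (Fin n)) :
    Finset (Fin n × Fin n) :=
  D.filter fun p => σ p.2 < σ p.1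

theorem card_filter_val_snd_eq_val_fst_add (n k : ℕ) :
    #{p : Fin n × Fin n | (p.2 : ℕ) = p.1 + k} = n - k := by
  rw [← card_range (n - k)]
  refine card_bij (fun p _ => (p.1 : ℕ)) ?_ ?_ ?_
  · intro p hp
    simp only [mem_filter, mem_univ, true_and] at hp
    simp only [mem_range]
    omega
  · intro p hp q hq h
    simp only [mem_filter, mem_univ, true_and] at hp hq
    ext <;> omega
  · intro i hi
    rw [mem_range] at hi
    exact ⟨(⟨i, by omega⟩, ⟨i + k, by omega⟩), by simp⟩

theorem card_pairsWithin (n d : ℕ) : #(pairsWithin n d) = ∑ k ∈ Icc 1 d, (n - k) := by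
  rw [card_eq_sum_card_fiberwise (f := fun p : Fin n × Fin n => (p.2 : ℕ) - p.1) (t := Icc 1 d)]
  · refine sum_congr rfl fun k hk => ?_
    rw [← card_filter_val_snd_eq_val_fst_add n k]
    congr 1
    ext p
    simp only [pairsWithin, mem_filter, mem_univ, true_and, mem_Icc, Fin.lt_def] at hk ⊢
    omega
  · intro p hp
    simp only [pairsWithin, coe_filter, mem_univ, true_and, Set.mem_ofPred_eq, coe_Icc,
      Set.mem_Icc, Fin.lt_def] at hp ⊢
    omega

theorem ne_of_mem_pairsWithin {n d : ℕ} {p : Fin n × Fin n} (hp : p ∈ pairsWithin n d) :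
    p.1 ≠ p.2 := by
  simp only [pairsWithin, mem_filter, mem_univ, true_and] at hp
  exact hp.1.ne

theorem rev_swap_mem_pairsWithin {n d : ℕ} {p : Fin n × Fin n} (hp : p ∈ pairsWithin n d) :
    (p.2.rev, p.1.rev) ∈ pairsWithin n d := by
  simp only [pairsWithin, mem_filter, mem_univ, true_and, Fin.lt_def, val_rev] at hp ⊢
  omega

theorem card_inversionsOn_mul_revPerm {n : ℕ} {D : Finset (Fin n × Fin n)}
    (hD : ∀ p ∈ D, p.1 ≠ p.2) (hrev : ∀ p ∈ D, (p.2.rev, p.1.rev) ∈ D) (σ : Perm (Fin n)) :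
    #(inversionsOn D (σ * revPerm)) = #{p ∈ D | ¬ σ p.2 < σ p.1} := by
  refine card_nbij' (fun p => (p.2.rev, p.1.rev)) (fun p => (p.2.rev, p.1.rev)) ?_ ?_ ?_ ?_
  · intro p hp
    simp only [inversionsOn, coe_filter, Set.mem_ofPred_eq, Perm.mul_apply, revPerm_apply] at hp ⊢
    exact ⟨hrev p hp.1, hp.2.asymm⟩
  · intro p hp
    simp only [inversionsOn, coe_filter, Set.mem_ofPred_eq, Perm.mul_apply, revPerm_apply,
      rev_rev] at hp ⊢
    exact ⟨hrev p hp.1, lt_of_le_of_ne (not_lt.mp hp.2) (σ.injective.ne (hD p hp.1))⟩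
  · intro p _
    simp
  · intro p _
    simp

theorem neg_one_pow_card_inversionsOn_mul_revPerm {n : ℕ} {D : Finset (Fin n × Fin n)}
    (hD : ∀ p ∈ D, p.1 ≠ p.2) (hrev : ∀ p ∈ D, (p.2.rev, p.1.rev) ∈ D) (σ : Perm (Fin n)) :
    (-1 : ℤ) ^ #(inversionsOn D (σ * revPerm)) = (-1) ^ #D * (-1) ^ #(inversionsOn D σ) := by
  rw [card_inversionsOn_mul_revPerm hD hrev, inversionsOn,
    ← card_filter_add_card_filter_not (s := D) (p := fun p => σ p.2 < σ p.1), pow_add,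
    mul_right_comm, ← pow_add, Even.neg_one_pow ⟨_, rfl⟩, one_mul]

theorem sum_neg_one_pow_card_inversionsOn_eq_zero {n : ℕ} {D : Finset (Fin n × Fin n)}
    (hD : ∀ p ∈ D, p.1 ≠ p.2) (hrev : ∀ p ∈ D, (p.2.rev, p.1.rev) ∈ D) (hodd : Odd #D) :
    ∑ σ : Perm (Fin n), (-1 : ℤ) ^ #(inversionsOn D σ) = 0 := by
  have h := Equiv.sum_comp (Equiv.mulRight revPerm) fun σ => (-1 : ℤ) ^ #(inversionsOn D σ)
  simp only [Equiv.coe_mulRight, neg_one_pow_card_inversionsOn_mul_revPerm hD hrev,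
    hodd.neg_one_pow, neg_one_mul, sum_neg_distrib] at h
  linarith

end Fin

/-- For odd `n ≥ 3`, the sum over `S_n` of `(-1)` raised to the number of
inversions of distance at most 3 equals `0`. -/
theorem inversions_distance_three_q_eq_neg_one (n : ℕ) (hn : 3 ≤ n)
    (hodd : Odd n) :
    ∑ σ : Equiv.Perm (Fin n),
      (-1 : ℤ) ^ (univ.filter (fun p : Fin n × Fin n =>
        p.1 < p.2 ∧ (p.2 : ℕ) ≤ (p.1 : ℕ) + 3 ∧ σ p.2 < σ p.1)).card
      = 0 := by
  have hcard : #(Fin.pairsWithin n 3) = 3 * n - 6 := by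
    rw [Fin.card_pairsWithin]
    simp only [Nat.reduceAdd, Nat.one_le_ofNat, sum_Icc_succ_top, Icc_self, sum_singleton]
    omega
  have hodd_card : Odd #(Fin.pairsWithin n 3) := by
    obtain ⟨k, rfl⟩ := hodd
    exact hcard ▸ ⟨3 * k - 2, by omega⟩
  simpa only [Fin.inversionsOn, Fin.pairsWithin, filter_filter, and_assoc] using
    Fin.sum_neg_one_pow_card_inversionsOn_eq_zero (fun _ => Fin.ne_of_mem_pairsWithin)
      (fun _ => Fin.rev_swap_mem_pairsWithin) hodd_card
end
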